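/- arXiv:2410.00529 — 7 statements merged into one kernel-verified Lean document; each statement's English description precedes it below -/
import Mathlib

section
/- For all integers k ≥ 1, j ≥ 1, the iterate F_k^j satisfies: (a) F_k^j(1) = F_k^j(2) = 1; (b) F_k^j(n) ≥ 1 whenever n ≥ 1; (c) F_k^j(n) < n whenever n ≥ 2; (d) for all n > 0, F_k(n+1) - F_k(n) = 1 - (F_k^k(n) - F_k^k(n-1)); (e) F_k^j(n+1) - F_k^j(n) ∈ {0,1} for all n ≥ 0; (f) F_k^j is monotonically increasing and surjective from ℕ onto ℕ. -/
/-- The substitution τ_k, applied to a single letter: τ_k(k) = k1 and τ_k(i) = i+1 for i ≠ k. -/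
def tauLetter (k i : ℕ) : List ℕ := if i = k then [k, 1] else [i + 1]

/-- The substitution τ_k, extended to finite words (lists of letters) by concatenation. -/
def tauWord (k : ℕ) (w : List ℕ) : List ℕ := w.flatMap (tauLetter k)

/-- The infinite fixed point x_k of τ_k (starting with the letter k): its n-th letter is the
n-th letter of any sufficiently long iterate τ_k^j(k), here j = n+1. -/
def xk (k n : ℕ) : ℕ := ((tauWord k)^[n + 1] [k]).getD n 0

/-- L_k(n) = |τ_k(x_k[0:n))|, the length of the τ_k-image of the prefix of x_k of length n. -/
def Lk (k n : ℕ) : ℕ := (tauWord k ((List.range n).map (xk k))).length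

/-- C_k^{(=i)}(n): the number of occurrences of the letter i among x_k[0],...,x_k[n-1]. -/
def Ceq (k i n : ℕ) : ℕ := ((Finset.range n).filter (fun m => xk k m = i)).card

/-- C_k^{(>j)}(n): the number of positions m < n with x_k[m] > j. -/
def Cgt (k j n : ℕ) : ℕ := ((Finset.range n).filter (fun m => j < xk k m)).card

/-- Basic properties of the iterates F_k^j of Hofstadter's function F_k, defined by
F_k(0) = 0 and F_k(n) = n - F_k^k(n-1) for n ≥ 1. -/
theorem stmt0 (k j : ℕ) (hk : 1 ≤ k) (hj : 1 ≤ j) (F : ℕ → ℕ)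
    (hF0 : F 0 = 0) (hF : ∀ n, 1 ≤ n → F n = n - F^[k] (n - 1)) :
    (F^[j] 1 = 1 ∧ F^[j] 2 = 1) ∧
    (∀ n, 1 ≤ n → 1 ≤ F^[j] n) ∧
    (∀ n, 2 ≤ n → F^[j] n < n) ∧
    (∀ n, 0 < n → (F (n + 1) : ℤ) - F n = 1 - ((F^[k] n : ℤ) - F^[k] (n - 1))) ∧
    (∀ n, F^[j] (n + 1) = F^[j] n ∨ F^[j] (n + 1) = F^[j] n + 1) ∧
    (Monotone (F^[j]) ∧ Function.Surjective (F^[j]) ∧ ¬ Function.Injective (F^[j])) := by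
  -- basic bounds on F
  have hB : ∀ n, F n ≤ n ∧ (1 ≤ n → 1 ≤ F n) := by
    intro n
    induction n using Nat.strong_induction_on with
    | _ n ih =>
      rcases Nat.eq_zero_or_pos n with h0 | h1
      · subst h0; simp [hF0]
      · have hmn : n - 1 < n := Nat.sub_lt h1 one_pos
        have hit : ∀ i, F^[i] (n-1) ≤ n - 1 ∧ (1 ≤ n - 1 → 1 ≤ F^[i] (n-1)) := by
          intro i
          induction i with
          | zero => simp
          | succ i ihi =>
            rw [Function.iterate_succ_apply']
            have h1' := ih (F^[i] (n-1)) (lt_of_le_of_lt ihi.1 hmn)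
            exact ⟨h1'.1.trans ihi.1, fun hm1 => h1'.2 (ihi.2 hm1)⟩
        have hFn := hF n h1
        have hk1 := (hit k).1
        constructor
        · omega
        · intro _; omega
  have hFle : ∀ n, F n ≤ n := fun n => (hB n).1
  have hFpos : ∀ n, 1 ≤ n → 1 ≤ F n := fun n => (hB n).2
  have hIterLe : ∀ i n, F^[i] n ≤ n := by
    intro i
    induction i with
    | zero => simp
    | succ i ih =>
      intro n; rw [Function.iterate_succ_apply']; exact (hFle _).trans (ih n)
  have hIterPos : ∀ i n, 1 ≤ n → 1 ≤ F^[i] n := by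
    intro i
    induction i with
    | zero => simp
    | succ i ih =>
      intro n hn; rw [Function.iterate_succ_apply']; exact hFpos _ (ih n hn)
  have hIter0 : ∀ i, F^[i] 0 = 0 := by
    intro i; have := hIterLe i 0; omega
  have hF1 : F 1 = 1 := by
    have := hF 1 le_rfl
    simpa [hIter0] using this
  have hIter1 : ∀ i, F^[i] 1 = 1 := by
    intro i
    induction i with
    | zero => rfl
    | succ i ih => rw [Function.iterate_succ_apply, hF1, ih]
  have hF2 : F 2 = 1 := by
    have := hF 2 (by norm_num)
    simpa [hIter1] using this
  have hIter2 : ∀ i, 1 ≤ i → F^[i] 2 = 1 := by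
    intro i hi
    cases i with
    | zero => omega
    | succ i => rw [Function.iterate_succ_apply, hF2, hIter1]
  have hLt : ∀ n, 2 ≤ n → F n + 1 ≤ n := by
    intro n hn
    have e := hF n (by omega)
    have h1 := hIterPos k (n-1) (by omega)
    have h2 := hIterLe k (n-1)
    omega
  -- the key step lemma
  have hStep : ∀ n i, F^[i] (n+1) = F^[i] n ∨ F^[i] (n+1) = F^[i] n + 1 := by
    intro n
    induction n using Nat.strong_induction_on with
    | _ n ih =>
      intro i
      match n, hk with
      | 0, _ =>
        right; rw [hIter1 i, hIter0 i]
      | 1, _ =>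
        cases i with
        | zero => right; rfl
        | succ i => left; rw [hIter2 (i+1) (by omega), hIter1]
      | (m+2), _ =>
        set n := m + 2 with hn
        have hn2 : 2 ≤ n := by omega
        have hT : F (n+1) = F n ∨ F (n+1) = F n + 1 := by
          have e1 := hF (n+1) (by omega)
          have e2 := hF n (by omega)
          have hk' := ih (n-1) (by omega) k
          have h2 := hIterLe k (n-1)
          have h3 := hIterLe k n
          have hn1 : n - 1 + 1 = n := by omega
          rw [hn1] at hk'
          simp only [Nat.add_sub_cancel] at e1
          rcases hk' with h | h <;> omega
        induction i with
        | zero => right; rfl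
        | succ i _ =>
          rw [Function.iterate_succ_apply, Function.iterate_succ_apply]
          rcases hT with h | h
          · rw [h]; left; rfl
          · rw [h]
            have hFn : F n < n := by have := hLt n hn2; omega
            exact ih (F n) hFn i
  have hmono : ∀ i, Monotone (F^[i]) := by
    intro i
    apply monotone_nat_of_le_succ
    intro n
    rcases hStep n i with h | h <;> omega
  have h2F : ∀ n, n ≤ 2 * F n := by
    intro n
    rcases Nat.eq_zero_or_pos n with h0 | h1
    · omega
    · have e := hF n h1
      have hk2 : F^[k] (n-1) ≤ F (n-1) := by
        obtain ⟨k', rfl⟩ : ∃ k', k = k' + 1 := ⟨k - 1, by omega⟩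
        rw [Function.iterate_succ_apply]
        exact hIterLe k' (F (n-1))
      have hm : F (n-1) ≤ F n := hmono 1 (by omega)
      have h2 := hIterLe k (n-1)
      omega
  have hpow : ∀ i n, n ≤ 2^i * F^[i] n := by
    intro i
    induction i with
    | zero => intro n; simp
    | succ i ih =>
      intro n
      rw [Function.iterate_succ_apply']
      calc n ≤ 2^i * F^[i] n := ih n
        _ ≤ 2^i * (2 * F (F^[i] n)) := Nat.mul_le_mul_left _ (h2F _)
        _ = 2^(i+1) * F (F^[i] n) := by ring
  have hIVT : ∀ N m, m ≤ F^[j] N → ∃ x, F^[j] x = m := by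
    intro N
    induction N with
    | zero =>
      intro m hm
      have h0 := hIter0 j
      exact ⟨0, by omega⟩
    | succ N ihN =>
      intro m hm
      rcases le_or_gt m (F^[j] N) with h | h
      · exact ihN m h
      · exact ⟨N+1, by rcases hStep N j with hs | hs <;> omega⟩
  refine ⟨⟨hIter1 j, hIter2 j hj⟩, fun n hn => hIterPos j n hn, ?_, ?_, fun n => hStep n j,
    hmono j, ?_, ?_⟩
  · -- F^[j] n < n for n ≥ 2
    have hc : ∀ i n, 2 ≤ n → F^[i+1] n < n := by
      intro i
      induction i with
      | zero =>
        intro n hn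
        simp only [zero_add, Function.iterate_one]
        have := hLt n hn; omega
      | succ i ih =>
        intro n hn
        rw [Function.iterate_succ_apply]
        have hFn : F n < n := by have := hLt n hn; omega
        rcases le_or_gt 2 (F n) with h2 | h2
        · exact lt_trans (ih (F n) h2) hFn
        · have : F n = 1 := by have := hFpos n (by omega); omega
          rw [this, hIter1]; omega
    intro n hn
    obtain ⟨j', rfl⟩ : ∃ j', j = j' + 1 := ⟨j - 1, by omega⟩
    exact hc j' n hn
  · -- the difference identity
    intro n hn
    have e1 := hF (n+1) (by omega)
    have e2 := hF n hn
    have h2 := hIterLe k (n-1)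
    have h3 := hIterLe k n
    simp only [Nat.add_sub_cancel] at e1
    omega
  · -- surjective
    intro m
    have hp : 0 < 2^j := Nat.pow_pos (by omega)
    have hreach : m ≤ F^[j] (2^j * m) := by
      have h := hpow j (2^j * m)
      exact Nat.le_of_mul_le_mul_left (by linarith [h]) hp
    exact hIVT (2^j * m) m hreach
  · -- not injective
    intro hinj
    have h12 : F^[j] 1 = F^[j] 2 := by rw [hIter1 j, hIter2 j hj]
    have := hinj h12
    omega
end

section
/- Let k ≥ 1. Then the word τ_k^j(k) (the j-fold iterate of the substitution τ_k applied to the single letter k) equals the word k·1·2⋯j when 0 ≤ j ≤ k, and equals the concatenation τ_k^{j-1}(k) · τ_k^{j-k}(k) when j ≥ k. -/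
/-!
τ_k shifts every letter below k up by one, so the word k·1⋯j is sent to k·1⋯(j+1) as long as
j < k. At j = k the word k·1⋯k splits as τ_k^{k-1}(k) · k = τ_k^{k-1}(k) · τ_k^0(k), and since
τ_k is a morphism, applying it to both sides propagates the splitting to every j ≥ k.
-/

theorem tauWord_append (k : ℕ) (u v : List ℕ) :
    tauWord k (u ++ v) = tauWord k u ++ tauWord k v := by
  simp [tauWord]

theorem tauWord_cons_self (k : ℕ) (w : List ℕ) : tauWord k (k :: w) = k :: 1 :: tauWord k w := by
  simp [tauWord, tauLetter]

theorem tauWord_eq_map_succ {k : ℕ} {w : List ℕ} (hw : k ∉ w) :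
    tauWord k w = w.map (· + 1) := by
  induction w with
  | nil => rfl
  | cons a w ih =>
    rw [List.mem_cons, not_or] at hw
    simp [tauWord, tauLetter, Ne.symm hw.1, ← ih hw.2]

theorem tauWord_range' {k s n : ℕ} (h : s + n ≤ k) :
    tauWord k (List.range' s n) = List.range' (s + 1) n := by
  have hk : k ∉ List.range' s n := by
    rw [List.mem_range'_1]; omega
  rw [tauWord_eq_map_succ hk, List.range'_succ_left]

theorem iterate_tauWord_of_le {k j : ℕ} (hj : j ≤ k) :
    (tauWord k)^[j] [k] = k :: List.range' 1 j := by
  induction j with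
  | zero => rfl
  | succ j ih =>
    rw [Function.iterate_succ_apply', ih (by omega), tauWord_cons_self,
      tauWord_range' (by omega), List.range'_succ]

theorem iterate_tauWord_add_succ (m i : ℕ) :
    (tauWord (m + 1))^[i + (m + 1)] [m + 1] =
      (tauWord (m + 1))^[i + m] [m + 1] ++ (tauWord (m + 1))^[i] [m + 1] := by
  induction i with
  | zero =>
    simp only [Nat.zero_add, Function.iterate_zero, id]
    rw [iterate_tauWord_of_le le_rfl, iterate_tauWord_of_le (Nat.le_succ m), List.range'_concat]
    simp [Nat.add_comm]
  | succ i ih =>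
    rw [Nat.add_right_comm, Function.iterate_succ_apply', ih, tauWord_append,
      ← Function.iterate_succ_apply' (tauWord (m + 1)) (i + m),
      ← Function.iterate_succ_apply' (tauWord (m + 1)) i, Nat.add_right_comm]

/-- τ_k^j(k) equals the word k·1·2⋯j when 0 ≤ j ≤ k, and equals the concatenation
τ_k^{j-1}(k) · τ_k^{j-k}(k) when j ≥ k. -/
theorem stmt1 (k : ℕ) (hk : 1 ≤ k) :
    (∀ j, j ≤ k → (tauWord k)^[j] [k] = k :: List.range' 1 j) ∧
    (∀ j, k ≤ j → (tauWord k)^[j] [k] = (tauWord k)^[j - 1] [k] ++ (tauWord k)^[j - k] [k]) := by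
  refine ⟨fun j => iterate_tauWord_of_le, fun j hj => ?_⟩
  obtain ⟨m, rfl⟩ := Nat.exists_eq_add_of_le' hk
  obtain ⟨i, rfl⟩ := Nat.exists_eq_add_of_le' hj
  simpa using iterate_tauWord_add_succ m i
end

section
/- For all k ≥ 1 and n ≥ 0: (1) F_k^{k-1}(n) = C_k^{(=k)}(n); (2) F_k^j(n) = C_k^{(>j)}(n) for all 0 ≤ j < k; (3) F_k^{k+i-1}(n) = C_k^{(=i)}(n+i) for all 1 ≤ i < k. -/
namespace S5

def wk (k j : ℕ) : List ℕ := (tauWord k)^[j] [k]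

lemma tauWord_append (k : ℕ) (a b : List ℕ) :
    tauWord k (a ++ b) = tauWord k a ++ tauWord k b := List.flatMap_append

lemma tauWord_prefix {k : ℕ} {a b : List ℕ} (h : a <+: b) :
    tauWord k a <+: tauWord k b := by
  obtain ⟨t, rfl⟩ := h
  exact ⟨tauWord k t, (tauWord_append k a t).symm⟩

lemma wk_succ (k j : ℕ) : wk k (j + 1) = tauWord k (wk k j) :=
  Function.iterate_succ_apply' _ _ _

lemma wk_prefix_succ (k j : ℕ) : wk k j <+: wk k (j + 1) := by
  induction j with
  | zero =>
      refine ⟨[1], ?_⟩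
      simp [wk, tauWord, tauLetter]
  | succ j ih =>
      rw [wk_succ, wk_succ]
      exact tauWord_prefix ih

lemma wk_prefix {k : ℕ} {j j' : ℕ} (h : j ≤ j') : wk k j <+: wk k j' := by
  induction j' with
  | zero => simpa [Nat.le_zero.mp h] using List.prefix_refl _
  | succ j' ih =>
      rcases Nat.lt_or_ge j (j' + 1) with h' | h'
      · exact (ih (Nat.lt_succ_iff.mp h')).trans (wk_prefix_succ k j')
      · have : j = j' + 1 := le_antisymm h h'
        rw [this]

lemma mem_k_wk (k j : ℕ) : k ∈ wk k j := by
  induction j with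
  | zero => simp [wk]
  | succ j ih =>
      rw [wk_succ]
      have : k ∈ tauLetter k k := by simp [tauLetter]
      exact List.mem_flatMap.mpr ⟨k, ih, this⟩

lemma one_le_length_tauLetter (k i : ℕ) : 1 ≤ (tauLetter k i).length := by
  unfold tauLetter; split <;> simp

lemma length_le_tauWord (k : ℕ) (v : List ℕ) : v.length ≤ (tauWord k v).length := by
  induction v with
  | nil => simp [tauWord]
  | cons a v ih =>
      have : tauWord k (a :: v) = tauLetter k a ++ tauWord k v := rfl
      rw [this, List.length_append, List.length_cons]
      have := one_le_length_tauLetter k a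
      omega

lemma length_lt_tauWord {k : ℕ} {v : List ℕ} (h : k ∈ v) :
    v.length + 1 ≤ (tauWord k v).length := by
  induction v with
  | nil => simp at h
  | cons a v ih =>
      have he : tauWord k (a :: v) = tauLetter k a ++ tauWord k v := rfl
      rw [he, List.length_append, List.length_cons]
      rcases List.mem_cons.mp h with h1 | h1
      · have : (tauLetter k a).length = 2 := by simp [tauLetter, h1.symm]
        have := length_le_tauWord k v
        omega
      · have := ih h1
        have := one_le_length_tauLetter k a
        omega

lemma lt_length_wk (k j : ℕ) : j < (wk k j).length := by
  induction j with
  | zero => simp [wk]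
  | succ j ih =>
      rw [wk_succ]
      have := length_lt_tauWord (mem_k_wk k j)
      omega

lemma xk_eq_getD {k j n : ℕ} (h : n < (wk k j).length) : xk k n = (wk k j).getD n 0 := by
  have h1 : n < (wk k (n + 1)).length := Nat.lt_of_succ_lt (lt_length_wk k (n + 1))
  rcases le_total j (n + 1) with hj | hj
  · have hp : wk k j <+: wk k (n + 1) := wk_prefix hj
    rw [xk, ← wk]
    rw [List.getD_eq_getElem _ _ h, List.getD_eq_getElem _ _ h1]
    exact (hp.getElem h).symm
  · have hp : wk k (n + 1) <+: wk k j := wk_prefix hj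
    rw [xk, ← wk]
    rw [List.getD_eq_getElem _ _ h, List.getD_eq_getElem _ _ h1]
    exact hp.getElem h1

lemma xk_mem {k : ℕ} (hk : 1 ≤ k) (n : ℕ) : 1 ≤ xk k n ∧ xk k n ≤ k := by
  have hall : ∀ j, ∀ a ∈ wk k j, 1 ≤ a ∧ a ≤ k := by
    intro j
    induction j with
    | zero => intro a ha; simp [wk] at ha; omega
    | succ j ih =>
        intro a ha
        rw [wk_succ] at ha
        obtain ⟨b, hb, hab⟩ := List.mem_flatMap.mp ha
        have hbk := ih b hb
        unfold tauLetter at hab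
        split at hab
        · simp at hab; rcases hab with rfl | rfl <;> omega
        · simp at hab; omega
  have h : n < (wk k (n + 1)).length := Nat.lt_of_succ_lt (lt_length_wk k (n + 1))
  have := hall (n + 1) (((wk k (n+1)).getD n 0)) (by
    rw [List.getD_eq_getElem _ _ h]; exact List.getElem_mem h)
  rwa [← xk_eq_getD h] at this


def Pk (k n : ℕ) : List ℕ := (List.range n).map (xk k)

lemma Lk_def' (k n : ℕ) : Lk k n = (tauWord k (Pk k n)).length := rfl

lemma length_Pk (k n : ℕ) : (Pk k n).length = n := by simp [Pk]

lemma getElem_Pk (k n i : ℕ) (h : i < (Pk k n).length) : (Pk k n)[i] = xk k i := by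
  simp [Pk] at h ⊢

lemma Pk_eq_take {k j n : ℕ} (h : n ≤ (wk k j).length) : Pk k n = (wk k j).take n := by
  apply List.ext_getElem
  · simp [length_Pk]; omega
  · intro i h1 h2
    rw [getElem_Pk]
    rw [List.getElem_take]
    have hi : i < (wk k j).length := lt_of_lt_of_le (by simpa [length_Pk] using h1) h
    rw [xk_eq_getD hi, List.getD_eq_getElem _ _ hi]

lemma tau_Pk (k n : ℕ) : tauWord k (Pk k n) = Pk k (Lk k n) := by
  have hn : n ≤ (wk k n).length := le_of_lt (lt_length_wk k n)
  have h1 : Pk k n = (wk k n).take n := Pk_eq_take hn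
  have hpre : Pk k n <+: wk k n := h1 ▸ List.take_prefix _ _
  have h2 : tauWord k (Pk k n) <+: wk k (n + 1) := by
    rw [wk_succ]; exact tauWord_prefix hpre
  have hlen : (tauWord k (Pk k n)).length = Lk k n := (Lk_def' k n).symm
  have h3 : Lk k n ≤ (wk k (n+1)).length := by
    rw [← hlen]; exact h2.length_le
  rw [Pk_eq_take h3]
  obtain ⟨t, ht⟩ := h2
  rw [← ht, List.take_left' hlen]

lemma Pk_succ (k n : ℕ) : Pk k (n + 1) = Pk k n ++ [xk k n] := by
  simp [Pk, List.range_succ]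

lemma Lk_zero (k : ℕ) : Lk k 0 = 0 := rfl

lemma Lk_succ (k n : ℕ) : Lk k (n + 1) = Lk k n + (tauLetter k (xk k n)).length := by
  rw [Lk_def', Lk_def', Pk_succ, tauWord_append, List.length_append]
  congr 1
  simp [tauWord]

lemma Lk_succ' (k n : ℕ) :
    Lk k (n + 1) = Lk k n + (if xk k n = k then 2 else 1) := by
  rw [Lk_succ]; unfold tauLetter; split <;> simp_all

lemma Lk_strictMono (k : ℕ) : StrictMono (Lk k) := by
  apply strictMono_nat_of_lt_succ
  intro n
  rw [Lk_succ']
  split <;> omega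

lemma le_Lk (k n : ℕ) : n ≤ Lk k n := by
  induction n with
  | zero => simp [Lk_zero]
  | succ n ih => rw [Lk_succ']; split <;> omega

/-- letters of the image block -/
lemma xk_block (k n : ℕ) {s : ℕ} (hs : s < (tauLetter k (xk k n)).length) :
    xk k (Lk k n + s) = (tauLetter k (xk k n)).getD s 0 := by
  have h := tau_Pk k (n + 1)
  rw [Pk_succ, tauWord_append] at h
  have h2 : tauWord k [xk k n] = tauLetter k (xk k n) := by simp [tauWord]
  rw [h2, tau_Pk] at h
  -- h : Pk k (Lk k n) ++ tauLetter k (xk k n) = Pk k (Lk k (n+1))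
  have hlt : Lk k n + s < Lk k (n + 1) := by rw [Lk_succ]; omega
  have hlen : Lk k n + s < (Pk k (Lk k (n+1))).length := by rw [length_Pk]; exact hlt
  have hgp := getElem_Pk k (Lk k (n+1)) (Lk k n + s) hlen
  have h4 := List.getElem_of_eq h.symm hlen
  rw [← hgp, h4]
  rw [List.getElem_append_right (by simp [length_Pk])]
  simp only [length_Pk]
  rw [List.getD_eq_getElem _ _ hs]
  congr 1
  omega

lemma xk_Lk (k n : ℕ) : xk k (Lk k n) = if xk k n = k then k else xk k n + 1 := by
  have h0 : 0 < (tauLetter k (xk k n)).length := one_le_length_tauLetter k _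
  have := xk_block k n h0
  rw [Nat.add_zero] at this
  rw [this]
  unfold tauLetter; split <;> simp

lemma xk_Lk_of_ne {k n : ℕ} (h : xk k n ≠ k) : xk k (Lk k n) = xk k n + 1 := by
  rw [xk_Lk]; simp [h]

lemma xk_Lk_of_eq {k n : ℕ} (h : xk k n = k) : xk k (Lk k n) = k := by
  rw [xk_Lk]; simp [h]

lemma xk_Lk_add_one {k n : ℕ} (h : xk k n = k) : xk k (Lk k n + 1) = 1 := by
  have h1 : (1 : ℕ) < (tauLetter k (xk k n)).length := by simp [tauLetter, h]
  have := xk_block k n h1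
  rw [this]
  simp [tauLetter, h]

/-- every position is of the form Lk p, or Lk p + 1 with x p = k -/
lemma rep (k m : ℕ) : (∃ p, m = Lk k p) ∨ (∃ p, xk k p = k ∧ m = Lk k p + 1) := by
  induction m with
  | zero => exact Or.inl ⟨0, (Lk_zero k).symm⟩
  | succ m ih =>
      rcases ih with ⟨p, rfl⟩ | ⟨p, hp, rfl⟩
      · by_cases h : xk k p = k
        · exact Or.inr ⟨p, h, rfl⟩
        · refine Or.inl ⟨p + 1, ?_⟩
          rw [Lk_succ']; simp [h]
      · refine Or.inl ⟨p + 1, ?_⟩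
        rw [Lk_succ']; simp [hp]


noncomputable def qk (k n : ℕ) : ℕ := Nat.find (⟨n, le_Lk k n⟩ : ∃ p, n ≤ Lk k p)

lemma lt_qk_iff (k p n : ℕ) : p < qk k n ↔ Lk k p < n := by
  rw [qk, Nat.lt_find_iff]
  constructor
  · intro h
    have := h p le_rfl
    omega
  · intro h m hm
    have := (Lk_strictMono k).monotone hm
    omega

lemma qk_le_self (k n : ℕ) : qk k n ≤ n := Nat.find_le (le_Lk k n)

lemma qk_Lk (k p : ℕ) : qk k (Lk k p) = p := by
  have h1 : ¬ p < qk k (Lk k p) := by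
    rw [lt_qk_iff]; omega
  rcases Nat.eq_zero_or_pos p with rfl | hp
  · omega
  · have h2 : p - 1 < qk k (Lk k p) := by
      rw [lt_qk_iff]
      exact Lk_strictMono k (by omega)
    omega

lemma Lk_qk_ge (k n : ℕ) : n ≤ Lk k (qk k n) :=
  Nat.find_spec (⟨n, le_Lk k n⟩ : ∃ p, n ≤ Lk k p)

section counting

variable {k : ℕ} (hk : 2 ≤ k)
include hk

lemma xk_Lk_ge_two (p : ℕ) : 2 ≤ xk k (Lk k p) := by
  have h1 := (xk_mem (show 1 ≤ k by omega) p).1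
  rw [xk_Lk]
  split <;> omega

/-- desubstitution for letters ≥ 2 -/
lemma desub_ge_two {m : ℕ} (h : 2 ≤ xk k m) : ∃ p, m = Lk k p := by
  rcases rep k m with ⟨p, rfl⟩ | ⟨p, hp, rfl⟩
  · exact ⟨p, rfl⟩
  · rw [xk_Lk_add_one hp] at h; omega

lemma xk_eq_one_iff {m : ℕ} : xk k m = 1 ↔ ∃ p, xk k p = k ∧ m = Lk k p + 1 := by
  constructor
  · intro h
    rcases rep k m with ⟨p, rfl⟩ | ⟨p, hp, rfl⟩
    · have := xk_Lk_ge_two hk p; omega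
    · exact ⟨p, hp, rfl⟩
  · rintro ⟨p, hp, rfl⟩
    exact xk_Lk_add_one hp

/-- (A) : Cgt 1 n = q n -/
lemma Cgt_one_eq_qk (n : ℕ) : Cgt k 1 n = qk k n := by
  rw [Cgt]
  rw [show qk k n = (Finset.range (qk k n)).card from (Finset.card_range _).symm]
  apply Finset.card_nbij' (fun m => qk k m) (fun p => Lk k p)
  · intro m hm
    simp only [Finset.mem_coe, Finset.mem_filter, Finset.mem_range] at hm ⊢
    obtain ⟨p, rfl⟩ := desub_ge_two (m := m) hk (by omega)
    rw [qk_Lk, lt_qk_iff]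
    exact hm.1
  · intro p hp
    simp only [Finset.mem_coe, Finset.mem_filter, Finset.mem_range] at hp ⊢
    rw [← lt_qk_iff]
    exact ⟨hp, by have := xk_Lk_ge_two hk p; omega⟩
  · intro m hm
    simp only [Finset.mem_coe, Finset.mem_filter, Finset.mem_range] at hm
    obtain ⟨p, rfl⟩ := desub_ge_two (m := m) hk (by omega)
    simp only [qk_Lk]
  · intro p hp
    simp only [qk_Lk]

/-- (B) : Cgt (t+1) n = Cgt t (q n) for 1 ≤ t, t+1 < k -/
lemma Cgt_succ_eq (t n : ℕ) (ht1 : 1 ≤ t) (ht2 : t + 1 < k) :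
    Cgt k (t + 1) n = Cgt k t (qk k n) := by
  rw [Cgt, Cgt]
  have key : ∀ p, (t + 1 < xk k (Lk k p) ↔ t < xk k p) := by
    intro p
    have h1 := (xk_mem (show 1 ≤ k by omega) p).2
    rw [xk_Lk]
    split <;> omega
  apply Finset.card_nbij' (fun m => qk k m) (fun p => Lk k p)
  · intro m hm
    simp only [Finset.mem_coe, Finset.mem_filter, Finset.mem_range] at hm ⊢
    obtain ⟨p, rfl⟩ := desub_ge_two (m := m) hk (by omega)
    simp only [qk_Lk]
    exact ⟨(lt_qk_iff k p n).mpr hm.1, (key p).mp hm.2⟩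
  · intro p hp
    simp only [Finset.mem_coe, Finset.mem_filter, Finset.mem_range] at hp ⊢
    exact ⟨(lt_qk_iff k p n).mp hp.1, (key p).mpr hp.2⟩
  · intro m hm
    simp only [Finset.mem_coe, Finset.mem_filter, Finset.mem_range] at hm
    obtain ⟨p, rfl⟩ := desub_ge_two (m := m) hk (by omega)
    simp only [qk_Lk]
  · intro p hp
    simp only [qk_Lk]

/-- (C) : Ceq 1 (n+1) = Ceq k (q n) -/
lemma Ceq_one_eq (n : ℕ) : Ceq k 1 (n + 1) = Ceq k k (qk k n) := by
  rw [Ceq, Ceq]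
  apply Finset.card_nbij' (fun m => qk k (m - 1)) (fun p => Lk k p + 1)
  · intro m hm
    simp only [Finset.mem_coe, Finset.mem_filter, Finset.mem_range] at hm ⊢
    obtain ⟨p, hp, rfl⟩ := (xk_eq_one_iff hk).mp hm.2
    simp only [Nat.add_sub_cancel, qk_Lk]
    exact ⟨(lt_qk_iff k p n).mpr (by omega), hp⟩
  · intro p hp
    simp only [Finset.mem_coe, Finset.mem_filter, Finset.mem_range] at hp ⊢
    have := (lt_qk_iff k p n).mp hp.1
    exact ⟨by omega, xk_Lk_add_one hp.2⟩
  · intro m hm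
    simp only [Finset.mem_coe, Finset.mem_filter, Finset.mem_range] at hm
    obtain ⟨p, hp, rfl⟩ := (xk_eq_one_iff hk).mp hm.2
    simp only [Nat.add_sub_cancel, qk_Lk]
  · intro p hp
    simp only [Nat.add_sub_cancel, qk_Lk]

/-- (D) : Ceq (i+1) n = Ceq i (q n) for 1 ≤ i, i+1 < k -/
lemma Ceq_succ_eq (i n : ℕ) (hi1 : 1 ≤ i) (hi2 : i + 1 < k) :
    Ceq k (i + 1) n = Ceq k i (qk k n) := by
  rw [Ceq, Ceq]
  have key : ∀ p, (xk k (Lk k p) = i + 1 ↔ xk k p = i) := by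
    intro p
    have h1 := (xk_mem (show 1 ≤ k by omega) p).2
    rw [xk_Lk]
    split <;> omega
  apply Finset.card_nbij' (fun m => qk k m) (fun p => Lk k p)
  · intro m hm
    simp only [Finset.mem_coe, Finset.mem_filter, Finset.mem_range] at hm ⊢
    obtain ⟨p, rfl⟩ := desub_ge_two (m := m) hk (by omega)
    simp only [qk_Lk]
    exact ⟨(lt_qk_iff k p n).mpr hm.1, (key p).mp hm.2⟩
  · intro p hp
    simp only [Finset.mem_coe, Finset.mem_filter, Finset.mem_range] at hp ⊢
    exact ⟨(lt_qk_iff k p n).mp hp.1, (key p).mpr hp.2⟩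
  · intro m hm
    simp only [Finset.mem_coe, Finset.mem_filter, Finset.mem_range] at hm
    obtain ⟨p, rfl⟩ := desub_ge_two (m := m) hk (by omega)
    simp only [qk_Lk]
  · intro p hp
    simp only [qk_Lk]

/-- Cgt 0 n = n -/
lemma Cgt_zero (n : ℕ) : Cgt k 0 n = n := by
  rw [Cgt]
  rw [Finset.filter_true_of_mem]
  · exact Finset.card_range n
  · intro m _
    have := (xk_mem (show 1 ≤ k by omega) m).1
    omega

/-- Cgt (k-1) n = Ceq k n -/
lemma Cgt_pred_eq_Ceq (n : ℕ) : Cgt k (k - 1) n = Ceq k k n := by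
  rw [Cgt, Ceq]
  congr 1
  apply Finset.filter_congr
  intro m _
  have h1 := (xk_mem (show 1 ≤ k by omega) m).2
  omega

/-- partition: Ceq 1 n + Cgt 1 n = n -/
lemma Ceq_one_add_Cgt_one (n : ℕ) : Ceq k 1 n + Cgt k 1 n = n := by
  rw [Ceq, Cgt]
  have h2 : ∀ m ∈ Finset.range n, (1 < xk k m ↔ ¬ xk k m = 1) := by
    intro m _
    have := (xk_mem (show 1 ≤ k by omega) m).1
    omega
  rw [Finset.filter_congr h2]
  rw [Finset.card_filter_add_card_filter_not]
  exact Finset.card_range n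

/-- block structure: any occurrence of letter i (1 ≤ i < k) is the end of a block k,1,2,...,i -/
lemma block (i : ℕ) (hi1 : 1 ≤ i) (hik : i + 1 ≤ k) :
    ∀ p, xk k p = i → ∃ b, p = b + i ∧ xk k b = k ∧
      (∀ s, 1 ≤ s → s ≤ i → xk k (b + s) = s ∧ Lk k (b + s) = Lk k b + s + 1) := by
  induction i with
  | zero => omega
  | succ i ih =>
    rcases Nat.eq_zero_or_pos i with rfl | hi
    · -- base case i + 1 = 1
      intro p hp
      obtain ⟨t, ht, rfl⟩ := (xk_eq_one_iff hk).mp hp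
      refine ⟨Lk k t, rfl, xk_Lk_of_eq ht, ?_⟩
      intro s hs1 hs2
      have hs : s = 1 := by omega
      subst hs
      constructor
      · exact hp
      · have := Lk_succ' k (Lk k t)
        rw [xk_Lk_of_eq ht] at this
        simp at this
        omega
    · -- inductive step, i ≥ 1, letter i+1 ≥ 2
      intro p hp
      have hp2 : 2 ≤ xk k p := by omega
      obtain ⟨t, rfl⟩ := desub_ge_two hk hp2
      have hxt : xk k t = i := by
        have := xk_Lk k t
        by_cases h : xk k t = k
        · rw [h, if_pos rfl] at this; omega
        · rw [if_neg h] at this; omega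
      obtain ⟨b', rfl, hb'k, hprops⟩ := ih (by omega) (by omega) t hxt
      have hLt : Lk k (b' + i) = Lk k b' + i + 1 := (hprops i (by omega) le_rfl).2
      refine ⟨Lk k b', by omega, xk_Lk_of_eq hb'k, ?_⟩
      -- letters along the block
      have hlet : ∀ s, 1 ≤ s → s ≤ i + 1 → xk k (Lk k b' + s) = s := by
        intro s hs1 hs2
        rcases Nat.eq_or_lt_of_le hs1 with h1 | h1
        · rw [← h1]; exact xk_Lk_add_one hb'k
        · -- 2 ≤ s : Lk k b' + s = Lk k (b' + (s-1))
          obtain ⟨s', rfl⟩ : ∃ s', s = s' + 1 := ⟨s - 1, by omega⟩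
          have hps := hprops s' (by omega) (by omega)
          have heq : Lk k b' + (s' + 1) = Lk k (b' + s') := by omega
          rw [heq, xk_Lk_of_ne (by rw [hps.1]; omega), hps.1]
      have hlen : ∀ s, 1 ≤ s → s ≤ i + 1 → Lk k (Lk k b' + s) = Lk k (Lk k b') + s + 1 := by
        intro s
        induction s with
        | zero => omega
        | succ s ihs =>
          intro hs1 hs2
          rcases Nat.eq_zero_or_pos s with rfl | hs
          · have h0 := Lk_succ' k (Lk k b')
            rw [xk_Lk_of_eq hb'k, if_pos rfl] at h0
            simp only [Nat.zero_add]
            omega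
          · have h1 := ihs (by omega) (by omega)
            have h2 := Lk_succ' k (Lk k b' + s)
            rw [hlet s (by omega) (by omega), if_neg (by omega)] at h2
            have e : Lk k b' + s + 1 = Lk k b' + (s + 1) := by omega
            rw [e] at h2
            omega
      intro s hs1 hs2
      exact ⟨hlet s hs1 hs2, hlen s hs1 hs2⟩

/-- shift lemma (R3) -/
lemma Ceq_shift (i n : ℕ) (hi1 : 1 ≤ i) (hi2 : i + 1 < k) :
    Ceq k (i + 1) (n + i + 1) = Ceq k i (qk k n + i) := by
  rw [Ceq_succ_eq hk i (n + i + 1) hi1 hi2]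
  have key : ∀ p, xk k p = i → (p < qk k (n + i + 1) ↔ p < qk k n + i) := by
    intro p hp
    obtain ⟨b, rfl, hbk, hprops⟩ := block hk i hi1 (by omega) p hp
    have hL : Lk k (b + i) = Lk k b + i + 1 := (hprops i hi1 le_rfl).2
    rw [lt_qk_iff, hL]
    have := (lt_qk_iff k b n)
    omega
  rw [Ceq, Ceq]
  congr 1
  apply Finset.ext
  intro p
  simp only [Finset.mem_filter, Finset.mem_range]
  constructor
  · rintro ⟨h1, h2⟩; exact ⟨(key p h2).mp h1, h2⟩
  · rintro ⟨h1, h2⟩; exact ⟨(key p h2).mpr h1, h2⟩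

end counting

/-- the tower of counting functions -/
def Dk (k t n : ℕ) : ℕ := if t < k then Cgt k t n else Ceq k (t - k + 1) (n + (t - k + 1))

section main

variable {k : ℕ} (hk : 2 ≤ k)
include hk

lemma Dk_step (t : ℕ) (ht : t + 1 ≤ 2 * k - 2) (n : ℕ) :
    Dk k (t + 1) n = Dk k t (qk k n) := by
  rcases Nat.eq_zero_or_pos t with rfl | ht0
  · rw [Dk, Dk, if_pos (by omega), if_pos (by omega), Cgt_zero hk, Cgt_one_eq_qk hk]
  rcases Nat.lt_or_ge (t + 1) k with h1 | h1
  · rw [Dk, Dk, if_pos (by omega), if_pos (by omega)]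
    exact Cgt_succ_eq hk t n ht0 h1
  rcases Nat.eq_or_lt_of_le h1 with h2 | h2
  · -- t + 1 = k
    rw [Dk, Dk, if_neg (by omega), if_pos (by omega)]
    have e1 : t + 1 - k + 1 = 1 := by omega
    rw [e1]
    rw [Ceq_one_eq hk n]
    rw [← Cgt_pred_eq_Ceq hk]
    congr 1
    omega
  · -- t ≥ k
    rw [Dk, Dk, if_neg (by omega), if_neg (by omega)]
    have e1 : t + 1 - k + 1 = (t - k + 1) + 1 := by omega
    rw [e1]
    have e2 : n + (t - k + 1 + 1) = n + (t - k + 1) + 1 := by omega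
    rw [e2]
    exact Ceq_shift hk (t - k + 1) n (by omega) (by omega)

lemma qk_iter (t : ℕ) (ht : t ≤ 2 * k - 2) (n : ℕ) : (qk k)^[t] n = Dk k t n := by
  induction t generalizing n with
  | zero => simp [Dk, if_pos (by omega : 0 < k), Cgt_zero hk]
  | succ t iht =>
      rw [Function.iterate_succ_apply, iht (by omega), Dk_step hk t ht]

lemma qk_iterate_le (t n : ℕ) : (qk k)^[t] n ≤ n := by
  induction t generalizing n with
  | zero => simp
  | succ t iht =>
      rw [Function.iterate_succ_apply]
      exact le_trans (iht _) (qk_le_self k n)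

lemma F_eq_qk (F : ℕ → ℕ) (hF0 : F 0 = 0) (hF : ∀ n, 1 ≤ n → F n = n - F^[k] (n - 1)) :
    ∀ n, F n = qk k n := by
  intro n
  induction n using Nat.strong_induction_on with
  | _ n ihn =>
  rcases Nat.eq_zero_or_pos n with rfl | hn
  · have := qk_le_self k 0
    omega
  · have hiter : ∀ t, F^[t] (n - 1) = (qk k)^[t] (n - 1) := by
      intro t
      induction t with
      | zero => rfl
      | succ t iht =>
          rw [Function.iterate_succ_apply', Function.iterate_succ_apply', iht]
          have hle : (qk k)^[t] (n - 1) ≤ n - 1 := qk_iterate_le hk t (n - 1)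
          exact ihn _ (by omega)
    rw [hF n hn, hiter k]
    rw [qk_iter hk k (by omega), Dk, if_neg (by omega)]
    have e1 : k - k + 1 = 1 := by omega
    rw [e1]
    have e2 : n - 1 + 1 = n := by omega
    rw [e2]
    have h3 := Ceq_one_add_Cgt_one hk n
    rw [Cgt_one_eq_qk hk] at h3
    omega

lemma F_iter_eq_Dk (F : ℕ → ℕ) (hF0 : F 0 = 0) (hF : ∀ n, 1 ≤ n → F n = n - F^[k] (n - 1))
    (t : ℕ) (ht : t ≤ 2 * k - 2) (n : ℕ) : F^[t] n = Dk k t n := by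
  induction t generalizing n with
  | zero => simp [Dk, if_pos (by omega : 0 < k), Cgt_zero hk]
  | succ t iht =>
      rw [Function.iterate_succ_apply, F_eq_qk hk F hF0 hF n, iht (by omega), Dk_step hk t ht]

end main
end S5

/-- Letter-counting identities: F_k^{k-1}(n) = C_k^{(=k)}(n); F_k^j(n) = C_k^{(>j)}(n)
for 0 ≤ j < k; and F_k^{k+i-1}(n) = C_k^{(=i)}(n+i) for 1 ≤ i < k. -/
theorem stmt5 (k : ℕ) (hk : 1 ≤ k) (F : ℕ → ℕ)
    (hF0 : F 0 = 0) (hF : ∀ n, 1 ≤ n → F n = n - F^[k] (n - 1)) :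
    (∀ n, F^[k - 1] n = Ceq k k n) ∧
    (∀ j, j < k → ∀ n, F^[j] n = Cgt k j n) ∧
    (∀ i, 1 ≤ i → i < k → ∀ n, F^[k + i - 1] n = Ceq k i (n + i)) := by
  
  rcases Nat.lt_or_ge k 2 with hk2 | hk2
  · -- k = 1
    have hk1 : k = 1 := by omega
    subst hk1
    have hx : ∀ m, xk 1 m = 1 := fun m => by have := S5.xk_mem (le_refl 1) m; omega
    refine ⟨?_, ?_, ?_⟩
    · intro n
      simp only [Nat.sub_self, Function.iterate_zero, id]
      rw [Ceq, Finset.filter_true_of_mem (fun m _ => hx m)]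
      exact (Finset.card_range n).symm
    · intro j hj n
      have hj0 : j = 0 := by omega
      subst hj0
      simp only [Function.iterate_zero, id]
      rw [Cgt, Finset.filter_true_of_mem (fun m _ => by have := hx m; omega)]
      exact (Finset.card_range n).symm
    · intro i hi1 hi2; omega
  · refine ⟨?_, ?_, ?_⟩
    · intro n
      rw [S5.F_iter_eq_Dk hk2 F hF0 hF (k - 1) (by omega) n, S5.Dk, if_pos (by omega)]
      exact S5.Cgt_pred_eq_Ceq hk2 n
    · intro j hj n
      rw [S5.F_iter_eq_Dk hk2 F hF0 hF j (by omega) n, S5.Dk, if_pos hj]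
    · intro i hi1 hi2 n
      rw [S5.F_iter_eq_Dk hk2 F hF0 hF (k + i - 1) (by omega) n, S5.Dk, if_neg (by omega)]
      have e : k + i - 1 - k + 1 = i := by omega
      rw [e]
end

section
/- For all k ≥ 1 and n ≥ 0, L_k(n) = n + C_k^{(=k)}(n) = n + F_k^{k-1}(n). -/
namespace Stmt6Aux

/-- The iterates of τ_k starting from [k]. -/
def W (k j : ℕ) : List ℕ := (tauWord k)^[j] [k]

/-- The prefix of x_k of length n. -/
def X (k n : ℕ) : List ℕ := (List.range n).map (xk k)

lemma tauLetter_length_pos (k i : ℕ) : 1 ≤ (tauLetter k i).length := by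
  unfold tauLetter; split <;> simp

lemma tauWord_append (k : ℕ) (u v : List ℕ) :
    tauWord k (u ++ v) = tauWord k u ++ tauWord k v := by
  simp [tauWord]

lemma tauWord_length_ge (k : ℕ) (w : List ℕ) : w.length ≤ (tauWord k w).length := by
  induction w with
  | nil => simp [tauWord]
  | cons a t ih =>
    simp only [tauWord, List.flatMap_cons, List.length_append, List.length_cons] at *
    have := tauLetter_length_pos k a
    omega

lemma W_head (k j : ℕ) : ∃ t, W k j = k :: t := by
  induction j with
  | zero => exact ⟨[], rfl⟩
  | succ j ih =>
    obtain ⟨t, ht⟩ := ih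
    refine ⟨1 :: tauWord k t, ?_⟩
    have : W k (j + 1) = tauWord k (W k j) := by
      simp [W, Function.iterate_succ_apply']
    rw [this, ht]
    show tauWord k ([k] ++ t) = _
    rw [tauWord_append]
    simp [tauWord, tauLetter]

lemma W_length (k j : ℕ) : j + 1 ≤ (W k j).length := by
  induction j with
  | zero => simp [W]
  | succ j ih =>
    obtain ⟨t, ht⟩ := W_head k j
    have hW : W k (j + 1) = tauWord k (W k j) := by
      simp [W, Function.iterate_succ_apply']
    rw [hW, ht]
    show _ ≤ (tauWord k ([k] ++ t)).length
    rw [tauWord_append, List.length_append]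
    have h1 : (tauWord k [k]).length = 2 := by simp [tauWord, tauLetter]
    have h2 := tauWord_length_ge k t
    rw [ht] at ih
    simp only [List.length_cons] at ih
    omega

lemma tauWord_prefix (k : ℕ) {u v : List ℕ} (h : u <+: v) :
    tauWord k u <+: tauWord k v := by
  obtain ⟨t, rfl⟩ := h
  rw [tauWord_append]
  exact List.prefix_append _ _

lemma W_succ (k j : ℕ) : W k (j + 1) = tauWord k (W k j) := by
  simp [W, Function.iterate_succ_apply']

lemma W_prefix_succ (k j : ℕ) : W k j <+: W k (j + 1) := by
  induction j with
  | zero =>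
    rw [W_succ]
    show [k] <+: tauWord k [k]
    have : tauWord k [k] = [k, 1] := by simp [tauWord, tauLetter]
    rw [this]
    exact ⟨[1], rfl⟩
  | succ j ih =>
    rw [W_succ, W_succ k (j + 1)]
    exact tauWord_prefix k ih

lemma W_prefix (k : ℕ) {a b : ℕ} (h : a ≤ b) : W k a <+: W k b := by
  induction b with
  | zero => simp_all
  | succ b ih =>
    rcases Nat.eq_or_lt_of_le h with rfl | h'
    · exact List.prefix_refl _
    · exact (ih (Nat.lt_succ_iff.mp h')).trans (W_prefix_succ k b)

lemma xk_eq (k n j : ℕ) (h : n + 1 ≤ j) : xk k n = (W k j).getD n 0 := by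
  have hp := W_prefix k h
  obtain ⟨t, ht⟩ := hp
  have hl : n < (W k (n + 1)).length := lt_of_lt_of_le (by omega) (W_length k (n + 1))
  show (W k (n + 1)).getD n 0 = _
  rw [← ht, List.getD_append _ _ _ _ hl]

lemma X_length (k n : ℕ) : (X k n).length = n := by simp [X]

lemma xk_getX (k : ℕ) {i n : ℕ} (h : i < n) :
    xk k i = (X k n)[i]'(by rw [X_length]; exact h) := by
  simp [X]

lemma X_eq_take (k : ℕ) {n j : ℕ} (h : n ≤ j) : X k n = (W k j).take n := by
  have hlen : n ≤ (W k j).length := le_trans (by omega) (W_length k j)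
  apply List.ext_getElem
  · rw [X_length, List.length_take]; omega
  · intro i h1 h2
    rw [X_length] at h1
    rw [List.getElem_take]
    rw [← xk_getX k h1]
    have hij : i + 1 ≤ j := by omega
    rw [xk_eq k i j hij]
    rw [List.getD_eq_getElem]

lemma Lk_def (k n : ℕ) : Lk k n = (tauWord k (X k n)).length := rfl

lemma key (k n : ℕ) : X k (Lk k n) = tauWord k (X k n) := by
  set j := n + 1 + Lk k n with hj
  have h2 : tauWord k (X k n) <+: W k (n + 1) := by
    rw [W_succ, X_eq_take k (le_refl n)]
    exact tauWord_prefix k (List.take_prefix n (W k n))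
  have h3 : tauWord k (X k n) <+: W k j :=
    h2.trans (W_prefix k (by omega))
  have h5 : tauWord k (X k n) = (W k j).take (Lk k n) := by
    rw [List.prefix_iff_eq_take] at h3
    exact h3
  rw [X_eq_take k (show Lk k n ≤ j by omega), ← h5]

lemma X_succ (k n : ℕ) : X k (n + 1) = X k n ++ [xk k n] := by
  simp [X, List.range_succ]

lemma tauWord_singleton (k a : ℕ) : tauWord k [a] = tauLetter k a := by
  simp [tauWord]

lemma Lk_succ (k n : ℕ) : Lk k (n + 1) = Lk k n + (tauLetter k (xk k n)).length := by
  rw [Lk_def, Lk_def, X_succ, tauWord_append, List.length_append, tauWord_singleton]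

lemma X_L_succ (k n : ℕ) :
    X k (Lk k (n + 1)) = X k (Lk k n) ++ tauLetter k (xk k n) := by
  rw [key, key, X_succ, tauWord_append, tauWord_singleton]

lemma Lk_lt_succ (k n : ℕ) : Lk k n < Lk k (n + 1) := by
  rw [Lk_succ]
  have := tauLetter_length_pos k (xk k n)
  omega

lemma Lk_strictMono (k : ℕ) : StrictMono (Lk k) :=
  strictMono_nat_of_lt_succ (Lk_lt_succ k)

lemma Lk_zero (k : ℕ) : Lk k 0 = 0 := by simp [Lk, tauWord]

lemma xk_L (k n : ℕ) : xk k (Lk k n) = if xk k n = k then k else xk k n + 1 := by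
  have h1 : Lk k n < Lk k (n + 1) := Lk_lt_succ k n
  have h2 := xk_getX k h1
  rw [h2, List.getElem_of_eq (X_L_succ k n),
    List.getElem_append_right (by rw [X_length])]
  simp only [X_length, Nat.sub_self]
  unfold tauLetter
  split <;> simp

lemma xk_L1 (k n : ℕ) (h : xk k n = k) : xk k (Lk k n + 1) = 1 := by
  have hlen : (tauLetter k (xk k n)).length = 2 := by simp [tauLetter, h]
  have h1 : Lk k n + 1 < Lk k (n + 1) := by rw [Lk_succ, hlen]; omega
  have h2 := xk_getX k h1
  rw [h2, List.getElem_of_eq (X_L_succ k n),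
    List.getElem_append_right (by rw [X_length]; omega)]
  simp only [X_length, Nat.add_sub_cancel_left]
  simp [tauLetter, h]

lemma mem_W_bounds (k : ℕ) (hk : 1 ≤ k) (j : ℕ) : ∀ a ∈ W k j, 1 ≤ a ∧ a ≤ k := by
  induction j with
  | zero => intro a ha; simp [W] at ha; omega
  | succ j ih =>
    intro a ha
    rw [W_succ] at ha
    rw [tauWord, List.mem_flatMap] at ha
    obtain ⟨b, hb, hab⟩ := ha
    obtain ⟨hb1, hb2⟩ := ih b hb
    unfold tauLetter at hab
    by_cases hbk : b = k
    · simp [hbk] at hab; rcases hab with rfl | rfl <;> omega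
    · simp [hbk] at hab; omega

lemma xk_bounds (k : ℕ) (hk : 1 ≤ k) (m : ℕ) : 1 ≤ xk k m ∧ xk k m ≤ k := by
  have hlen : m < (W k (m + 1)).length := lt_of_lt_of_le (by omega) (W_length k (m + 1))
  have : xk k m = (W k (m + 1))[m] := by
    show (W k (m + 1)).getD m 0 = _
    rw [List.getD_eq_getElem]
  rw [this]
  exact mem_W_bounds k hk (m + 1) _ (List.getElem_mem hlen)

lemma exists_block (k m : ℕ) : ∃ n, Lk k n ≤ m ∧ m < Lk k (n + 1) := by
  have hP : ∃ n, m < Lk k n :=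
    ⟨m + 1, lt_of_lt_of_le (Nat.lt_succ_self m) ((Lk_strictMono k).le_apply)⟩
  set n0 := Nat.find hP with hn0
  have hspec : m < Lk k n0 := Nat.find_spec hP
  have hne : n0 ≠ 0 := by
    intro h
    rw [h, Lk_zero] at hspec
    omega
  refine ⟨n0 - 1, ?_, ?_⟩
  · have := Nat.find_min hP (show n0 - 1 < n0 by omega)
    omega
  · have : n0 - 1 + 1 = n0 := by omega
    rw [this]
    exact hspec

lemma card_filter_succ (p : ℕ → Prop) [DecidablePred p] (n : ℕ) :
    ((Finset.range (n + 1)).filter p).card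
      = ((Finset.range n).filter p).card + if p n then 1 else 0 := by
  rw [Finset.range_add_one, Finset.filter_insert]
  split
  · rw [Finset.card_insert_of_notMem (by simp)]
  · simp

lemma Cgt_succ (k j n : ℕ) :
    Cgt k j (n + 1) = Cgt k j n + if j < xk k n then 1 else 0 :=
  card_filter_succ _ n

lemma Ceq_succ (k i n : ℕ) :
    Ceq k i (n + 1) = Ceq k i n + if xk k n = i then 1 else 0 :=
  card_filter_succ _ n

lemma Cgt_zero (k j : ℕ) : Cgt k j 0 = 0 := by simp [Cgt]

lemma Cgt_le (k j n : ℕ) : Cgt k j n ≤ n :=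
  le_trans (Finset.card_filter_le _ _) (by simp)

lemma Cgt_mono (k j : ℕ) : Monotone (fun n => Cgt k j n) := by
  apply monotone_nat_of_le_succ
  intro n
  rw [Cgt_succ]
  split <;> omega

lemma xk_L_gt_one (k : ℕ) (hk2 : 2 ≤ k) (n : ℕ) : 1 < xk k (Lk k n) := by
  rw [xk_L]
  have := (xk_bounds k (by omega) n).1
  split <;> omega

lemma gL (k : ℕ) (hk2 : 2 ≤ k) (i : ℕ) : Cgt k 1 (Lk k i) = i := by
  induction i with
  | zero => rw [Lk_zero, Cgt_zero]
  | succ i ih =>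
    have hgt := xk_L_gt_one k hk2 i
    by_cases h : xk k i = k
    · have hlen : (tauLetter k (xk k i)).length = 2 := by simp [tauLetter, h]
      have hL : Lk k (i + 1) = Lk k i + 2 := by rw [Lk_succ, hlen]
      have h1 : xk k (Lk k i + 1) = 1 := xk_L1 k i h
      rw [hL]
      have e1 : Lk k i + 2 = (Lk k i + 1) + 1 := by omega
      rw [e1, Cgt_succ, Cgt_succ, ih]
      rw [if_pos hgt, if_neg (by omega)]
    · have hlen : (tauLetter k (xk k i)).length = 1 := by simp [tauLetter, h]
      have hL : Lk k (i + 1) = Lk k i + 1 := by rw [Lk_succ, hlen]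
      rw [hL, Cgt_succ, ih, if_pos hgt]

lemma gL_iff (k : ℕ) (hk2 : 2 ≤ k) (i n : ℕ) : Lk k i < n ↔ i < Cgt k 1 n := by
  constructor
  · intro h
    have h1 : Cgt k 1 (Lk k i + 1) ≤ Cgt k 1 n := Cgt_mono k 1 h
    rw [Cgt_succ, gL k hk2, if_pos (xk_L_gt_one k hk2 i)] at h1
    omega
  · intro h
    by_contra hc
    push_neg at hc
    have h1 : Cgt k 1 n ≤ Cgt k 1 (Lk k i) := Cgt_mono k 1 hc
    rw [gL k hk2] at h1
    omega

lemma block_cases (k : ℕ) (m : ℕ) :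
    (∃ i, m = Lk k i) ∨ (∃ i, xk k i = k ∧ m = Lk k i + 1) := by
  obtain ⟨n, h1, h2⟩ := exists_block k m
  by_cases h : xk k n = k
  · have hlen : (tauLetter k (xk k n)).length = 2 := by simp [tauLetter, h]
    have hL : Lk k (n + 1) = Lk k n + 2 := by rw [Lk_succ, hlen]
    rw [hL] at h2
    rcases (show m = Lk k n ∨ m = Lk k n + 1 by omega) with rfl | rfl
    · exact Or.inl ⟨n, rfl⟩
    · exact Or.inr ⟨n, h, rfl⟩
  · have hlen : (tauLetter k (xk k n)).length = 1 := by simp [tauLetter, h]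
    have hL : Lk k (n + 1) = Lk k n + 1 := by rw [Lk_succ, hlen]
    rw [hL] at h2
    exact Or.inl ⟨n, by omega⟩

lemma x_gt_one_iff (k : ℕ) (hk2 : 2 ≤ k) (m : ℕ) :
    1 < xk k m ↔ ∃ i, m = Lk k i := by
  constructor
  · intro h
    rcases block_cases k m with hc | ⟨i, hik, rfl⟩
    · exact hc
    · rw [xk_L1 k i hik] at h; omega
  · rintro ⟨i, rfl⟩
    exact xk_L_gt_one k hk2 i

lemma x_eq_one_iff (k : ℕ) (hk2 : 2 ≤ k) (m : ℕ) :
    xk k m = 1 ↔ ∃ i, xk k i = k ∧ m = Lk k i + 1 := by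
  constructor
  · intro h
    rcases block_cases k m with ⟨i, rfl⟩ | hc
    · have := xk_L_gt_one k hk2 i; omega
    · exact hc
  · rintro ⟨i, hik, rfl⟩
    exact xk_L1 k i hik

lemma cnt_step (k : ℕ) (hk2 : 2 ≤ k) (j n : ℕ) (hj1 : 1 ≤ j) (hjk : j + 1 < k) :
    Cgt k (j + 1) n = Cgt k j (Cgt k 1 n) := by
  unfold Cgt
  refine (Finset.card_bij (fun i _ => Lk k i) ?_ ?_ ?_).symm
  · intro i hi
    simp only [Finset.mem_filter, Finset.mem_range] at hi ⊢
    obtain ⟨hi1, hi2⟩ := hi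
    refine ⟨(gL_iff k hk2 i n).mpr hi1, ?_⟩
    rw [xk_L]
    split <;> omega
  · intro a _ b _ hab
    exact (Lk_strictMono k).injective hab
  · intro m hm
    simp only [Finset.mem_filter, Finset.mem_range] at hm
    obtain ⟨hm1, hm2⟩ := hm
    obtain ⟨i, rfl⟩ := (x_gt_one_iff k hk2 m).mp (by omega)
    refine ⟨i, ?_, rfl⟩
    simp only [Finset.mem_filter, Finset.mem_range]
    refine ⟨(gL_iff k hk2 i n).mp hm1, ?_⟩
    rw [xk_L] at hm2
    have := (xk_bounds k (by omega) i).2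
    by_cases h : xk k i = k
    · omega
    · rw [if_neg h] at hm2; omega
  
lemma cnt_eq1 (k : ℕ) (hk2 : 2 ≤ k) (n : ℕ) (hn : 1 ≤ n) :
    Ceq k 1 n = Ceq k k (Cgt k 1 (n - 1)) := by
  unfold Ceq
  refine (Finset.card_bij (fun i _ => Lk k i + 1) ?_ ?_ ?_).symm
  · intro i hi
    simp only [Finset.mem_filter, Finset.mem_range] at hi ⊢
    obtain ⟨hi1, hi2⟩ := hi
    have := (gL_iff k hk2 i (n - 1)).mpr hi1
    exact ⟨by omega, xk_L1 k i hi2⟩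
  · intro a _ b _ hab
    exact (Lk_strictMono k).injective (by omega)
  · intro m hm
    simp only [Finset.mem_filter, Finset.mem_range] at hm
    obtain ⟨hm1, hm2⟩ := hm
    obtain ⟨i, hik, rfl⟩ := (x_eq_one_iff k hk2 m).mp hm2
    refine ⟨i, ?_, rfl⟩
    simp only [Finset.mem_filter, Finset.mem_range]
    exact ⟨(gL_iff k hk2 i (n - 1)).mp (by omega), hik⟩

lemma cnt_part (k : ℕ) (hk : 1 ≤ k) (n : ℕ) : n = Cgt k 1 n + Ceq k 1 n := by
  have h := Finset.card_filter_add_card_filter_not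
    (s := Finset.range n) (p := fun m => 1 < xk k m)
  have h2 : (Finset.range n).filter (fun m => ¬ 1 < xk k m)
      = (Finset.range n).filter (fun m => xk k m = 1) := by
    apply Finset.filter_congr
    intro m _
    have := (xk_bounds k hk m).1
    constructor <;> intro <;> omega
  rw [h2, Finset.card_range] at h
  unfold Cgt Ceq
  omega

lemma ceqk_eq_cgt (k : ℕ) (hk : 1 ≤ k) (n : ℕ) : Ceq k k n = Cgt k (k - 1) n := by
  unfold Ceq Cgt
  congr 1
  apply Finset.filter_congr
  intro m _
  have h1 := (xk_bounds k hk m).1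
  have h2 := (xk_bounds k hk m).2
  constructor <;> intro <;> omega

lemma cnt_iter (k : ℕ) (hk2 : 2 ≤ k) (j : ℕ) (hj1 : 1 ≤ j) (hjk : j ≤ k - 1) (n : ℕ) :
    Cgt k j n = (fun m => Cgt k 1 m)^[j] n := by
  induction j generalizing n with
  | zero => omega
  | succ j ih =>
    rcases Nat.eq_zero_or_pos j with rfl | hj
    · simp
    · rw [cnt_step k hk2 j n hj (by omega), ih hj (by omega),
        Function.iterate_succ_apply]

lemma g_iter_le (k j m : ℕ) : (fun m => Cgt k 1 m)^[j] m ≤ m := by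
  induction j generalizing m with
  | zero => simp
  | succ j ih =>
    rw [Function.iterate_succ_apply]
    exact le_trans (ih _) (Cgt_le k 1 m)

lemma g_rec (k : ℕ) (hk2 : 2 ≤ k) (n : ℕ) (hn : 1 ≤ n) :
    Cgt k 1 n + (fun m => Cgt k 1 m)^[k] (n - 1) = n := by
  have hk1 : k - 1 + 1 = k := by omega
  have e1 : (fun m => Cgt k 1 m)^[k - 1 + 1] (n - 1)
      = (fun m => Cgt k 1 m)^[k - 1] (Cgt k 1 (n - 1)) :=
    Function.iterate_succ_apply _ _ _
  rw [hk1] at e1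
  rw [e1, ← cnt_iter k hk2 (k - 1) (by omega) le_rfl, ← ceqk_eq_cgt k (by omega),
    ← cnt_eq1 k hk2 n hn]
  exact (cnt_part k (by omega) n).symm

lemma Lk_count (k : ℕ) (n : ℕ) : Lk k n = n + Ceq k k n := by
  induction n with
  | zero => rw [Lk_zero]; simp [Ceq]
  | succ n ih =>
    rw [Lk_succ, Ceq_succ, ih]
    by_cases h : xk k n = k <;> simp [tauLetter, h] <;> omega

end Stmt6Aux

/-- L_k(n) = n + C_k^{(=k)}(n) = n + F_k^{k-1}(n). -/
theorem stmt6 (k : ℕ) (hk : 1 ≤ k) (F : ℕ → ℕ)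
    (hF0 : F 0 = 0) (hF : ∀ n, 1 ≤ n → F n = n - F^[k] (n - 1)) :
    ∀ n, Lk k n = n + Ceq k k n ∧ Lk k n = n + F^[k - 1] n := by
  have part2 : ∀ n, Ceq k k n = F^[k - 1] n := by
    rcases eq_or_lt_of_le hk with h1 | hk2
    · intro n
      have hk0 : k - 1 = 0 := by omega
      rw [hk0, Function.iterate_zero_apply]
      unfold Ceq
      rw [Finset.filter_true_of_mem, Finset.card_range]
      intro m _
      have := Stmt6Aux.xk_bounds k hk m
      omega
    · have hFg : ∀ n, F n = Cgt k 1 n := by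
        intro n
        induction n using Nat.strong_induction_on with
        | _ n ih =>
          rcases Nat.eq_zero_or_pos n with rfl | hn
          · rw [hF0, Stmt6Aux.Cgt_zero]
          · have hiter : ∀ j m, m ≤ n - 1 → F^[j] m = (fun m => Cgt k 1 m)^[j] m := by
              intro j
              induction j with
              | zero => intro m _; simp
              | succ j ihj =>
                intro m hm
                rw [Function.iterate_succ_apply', Function.iterate_succ_apply', ihj m hm]
                have h1 : (fun m => Cgt k 1 m)^[j] m ≤ m := Stmt6Aux.g_iter_le k j m
                exact ih _ (by omega)
            rw [hF n hn, hiter k (n - 1) le_rfl]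
            have := Stmt6Aux.g_rec k hk2 n hn
            omega
      intro n
      rw [Stmt6Aux.ceqk_eq_cgt k hk, Stmt6Aux.cnt_iter k hk2 (k - 1) (by omega) le_rfl]
      have hFfun : F = fun m => Cgt k 1 m := funext hFg
      rw [hFfun]
  intro n
  have h1 := Stmt6Aux.Lk_count k n
  exact ⟨h1, by rw [h1, part2 n]⟩
end

section
/- For k > 1 and n ≥ 0, F_k(n) = n - C_k^{(=1)}(n) = C_k^{(≠1)}(n) (the number of positions m < n with x_k[m] ≠ 1). Consequently, F_k(n+1) - F_k(n) equals 0 if x_k[n] = 1 and equals 1 otherwise. -/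
namespace S7

def W (k j : ℕ) : List ℕ := (tauWord k)^[j] [k]
def P (k n : ℕ) : List ℕ := (List.range n).map (xk k)

lemma tauWord_append (k : ℕ) (u v : List ℕ) :
    tauWord k (u ++ v) = tauWord k u ++ tauWord k v := List.flatMap_append (xs := u) (ys := v)

lemma tauWord_prefix {k : ℕ} {u v : List ℕ} (h : u <+: v) :
    tauWord k u <+: tauWord k v := by
  obtain ⟨t, rfl⟩ := h
  rw [tauWord_append]; exact List.prefix_append _ _

lemma W_succ (k j : ℕ) : W k (j + 1) = tauWord k (W k j) :=
  Function.iterate_succ_apply' _ _ _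

lemma W_prefix_succ (k j : ℕ) : W k j <+: W k (j + 1) := by
  induction j with
  | zero =>
    show [k] <+: tauWord k [k]
    simp [tauWord, tauLetter]
  | succ j ih =>
    rw [W_succ, W_succ]
    exact tauWord_prefix ih

lemma W_prefix (k : ℕ) {j j' : ℕ} (h : j ≤ j') : W k j <+: W k j' := by
  induction j' with
  | zero => simp_all
  | succ j' ih =>
    rcases Nat.lt_or_ge j (j' + 1) with h' | h'
    · exact (ih (Nat.lt_succ_iff.mp h')).trans (W_prefix_succ k j')
    · have : j = j' + 1 := le_antisymm h h'
      subst this; rfl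

lemma length_le_tauWord (k : ℕ) (w : List ℕ) : w.length ≤ (tauWord k w).length := by
  induction w with
  | nil => simp [tauWord]
  | cons a w ih =>
    have : tauWord k (a :: w) = tauLetter k a ++ tauWord k w := rfl
    rw [this, List.length_append, List.length_cons]
    have h1 : 1 ≤ (tauLetter k a).length := by
      unfold tauLetter; split <;> simp
    omega

lemma mem_length_lt_tauWord (k : ℕ) (w : List ℕ) (h : k ∈ w) :
    w.length < (tauWord k w).length := by
  induction w with
  | nil => simp at h
  | cons a w ih =>
    have he : tauWord k (a :: w) = tauLetter k a ++ tauWord k w := rfl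
    rw [he, List.length_append, List.length_cons]
    rcases List.mem_cons.mp h with rfl | hm
    · have : (tauLetter k k).length = 2 := by simp [tauLetter]
      have := length_le_tauWord k w
      omega
    · have h1 : 1 ≤ (tauLetter k a).length := by
        unfold tauLetter; split <;> simp
      have := ih hm
      omega

lemma head_mem_W (k j : ℕ) : k ∈ W k j := by
  have h : [k] <+: W k j := W_prefix k (Nat.zero_le j)
  obtain ⟨t, ht⟩ := h
  rw [← ht]; simp

lemma length_W (k j : ℕ) : j < (W k j).length := by
  induction j with
  | zero => simp [W]
  | succ j ih =>
    rw [W_succ]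
    have := mem_length_lt_tauWord k (W k j) (head_mem_W k j)
    omega

lemma xk_eq_W (k n j : ℕ) (h : n < (W k j).length) :
    xk k n = (W k j).getD n 0 := by
  rcases Nat.le_total (n + 1) j with hj | hj
  · have hp := W_prefix k hj
    have hn : n < (W k (n + 1)).length := (length_W k (n + 1)).trans' (by omega)
    show (W k (n+1)).getD n 0 = _
    rw [List.getD_eq_getElem _ _ hn, List.getD_eq_getElem _ _ h, hp.getElem hn]
  · have hp := W_prefix k hj
    have hn : n < (W k (n + 1)).length := (length_W k (n + 1)).trans' (by omega)
    show (W k (n+1)).getD n 0 = _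
    rw [List.getD_eq_getElem _ _ hn, List.getD_eq_getElem _ _ h, hp.getElem h]

lemma P_length (k n : ℕ) : (P k n).length = n := by simp [P]

lemma P_getElem' (k n i : ℕ) (h : i < n) : (P k n)[i]'(by simp [P_length]; omega) = xk k i := by
  simp [P]

lemma P_prefix_W (k n j : ℕ) (h : n ≤ (W k j).length) : P k n <+: W k j := by
  rw [List.prefix_iff_eq_take]
  apply List.ext_getElem
  · simp [P_length]; omega
  · intro i h1 h2
    rw [P_getElem' k n i (by simpa [P_length] using h1)]
    rw [List.getElem_take]
    have hi : i < (W k j).length := by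
      have := List.length_take_le (P k n).length (W k j)
      simp [P_length] at h1 ⊢; omega
    rw [xk_eq_W k i j hi, List.getD_eq_getElem _ _ hi]

lemma tauP_eq (k n : ℕ) : tauWord k (P k n) = P k (Lk k n) := by
  have hLk : Lk k n = (tauWord k (P k n)).length := rfl
  have hn : n ≤ (W k n).length := (length_W k n).le
  have h1 : P k n <+: W k n := P_prefix_W k n n hn
  have h2 : tauWord k (P k n) <+: W k (n + 1) := by
    rw [W_succ]; exact tauWord_prefix h1
  have h3 : P k (Lk k n) <+: W k (n + 1) := by
    apply P_prefix_W
    rw [hLk]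
    exact ((tauWord_prefix (k := k) h1).length_le).trans (by rw [W_succ])
  have h4 : tauWord k (P k n) <+: P k (Lk k n) :=
    List.prefix_of_prefix_length_le h2 h3 (by rw [P_length, hLk])
  exact h4.eq_of_length (by rw [P_length, hLk])

lemma tauWord_singleton (k a : ℕ) : tauWord k [a] = tauLetter k a := by
  simp [tauWord]

lemma P_succ (k n : ℕ) : P k (n + 1) = P k n ++ [xk k n] := by
  simp [P, List.range_succ]

lemma Lk_zero (k : ℕ) : Lk k 0 = 0 := rfl

lemma Lk_succ (k n : ℕ) : Lk k (n + 1) = Lk k n + (tauLetter k (xk k n)).length := by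
  show (tauWord k (P k (n+1))).length = (tauWord k (P k n)).length + _
  rw [P_succ, tauWord_append, List.length_append]
  rw [tauWord_singleton]

lemma tauLetter_length (k i : ℕ) : (tauLetter k i).length = if i = k then 2 else 1 := by
  unfold tauLetter; split <;> simp_all

lemma Lk_succ' (k n : ℕ) :
    Lk k (n + 1) = Lk k n + (if xk k n = k then 2 else 1) := by
  rw [Lk_succ, tauLetter_length]

lemma Lk_lt_succ (k n : ℕ) : Lk k n < Lk k (n + 1) := by
  rw [Lk_succ']; split <;> omega

lemma Lk_strictMono (k : ℕ) : StrictMono (Lk k) :=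
  strictMono_nat_of_lt_succ (Lk_lt_succ k)

lemma P_block (k n : ℕ) :
    P k (Lk k (n + 1)) = P k (Lk k n) ++ tauLetter k (xk k n) := by
  rw [← tauP_eq, ← tauP_eq, P_succ, tauWord_append]
  rw [tauWord_singleton]

lemma xk_block_start (k n : ℕ) :
    xk k (Lk k n) = if xk k n = k then k else xk k n + 1 := by
  have h := P_block k n
  have hlen : Lk k n < (P k (Lk k (n+1))).length := by
    rw [P_length]; exact Lk_lt_succ k n
  have h1 := P_getElem' k (Lk k (n+1)) (Lk k n) (Lk_lt_succ k n)
  have h2 := List.getElem_of_eq h (by rw [P_length]; exact Lk_lt_succ k n)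
  rw [← h1, h2, List.getElem_append_right (by rw [P_length])]
  simp only [P_length, Nat.sub_self]
  unfold tauLetter
  split <;> simp

lemma xk_block_one (k n : ℕ) (h : xk k n = k) : xk k (Lk k n + 1) = 1 := by
  have hb := P_block k n
  have hlt : Lk k n + 1 < Lk k (n + 1) := by rw [Lk_succ', if_pos h]; omega
  have h1 := P_getElem' k (Lk k (n+1)) (Lk k n + 1) hlt
  have h2 := List.getElem_of_eq hb (by rw [P_length]; exact hlt)
  rw [← h1, h2, List.getElem_append_right (by rw [P_length]; omega)]
  simp only [P_length]
  simp [tauLetter, h]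

lemma xk_range (k : ℕ) (hk : 1 < k) (m : ℕ) : 1 ≤ xk k m ∧ xk k m ≤ k := by
  have key : ∀ j, ∀ a ∈ W k j, 1 ≤ a ∧ a ≤ k := by
    intro j
    induction j with
    | zero => intro a ha; simp [W] at ha; omega
    | succ j ih =>
      intro a ha
      rw [W_succ] at ha
      unfold tauWord at ha
      rw [List.mem_flatMap] at ha
      obtain ⟨b, hb, hab⟩ := ha
      have hbr := ih b hb
      unfold tauLetter at hab
      split at hab <;> simp at hab
      · rcases hab with rfl | rfl <;> omega
      · omega
  have hm : m < (W k (m+1)).length := (length_W k (m+1)).trans' (by omega)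
  have : xk k m ∈ W k (m+1) := by
    rw [xk_eq_W k m (m+1) hm, List.getD_eq_getElem _ _ hm]
    exact List.getElem_mem hm
  exact key (m+1) _ this

lemma coverage (k m : ℕ) : ∃ n, Lk k n ≤ m ∧ m < Lk k (n + 1) := by
  induction m with
  | zero =>
    have h0 := Lk_zero k
    have h1 := Lk_lt_succ k 0
    exact ⟨0, by omega, by omega⟩
  | succ m ih =>
    obtain ⟨n, h1, h2⟩ := ih
    rcases Nat.lt_or_ge (m + 1) (Lk k (n + 1)) with h | h
    · exact ⟨n, by omega, h⟩
    · exact ⟨n + 1, h, by have := Lk_lt_succ k (n + 1); omega⟩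

lemma coverage' (k m : ℕ) : ∃ n, m = Lk k n ∨ (xk k n = k ∧ m = Lk k n + 1) := by
  obtain ⟨n, h1, h2⟩ := coverage k m
  refine ⟨n, ?_⟩
  rw [Lk_succ'] at h2
  by_cases hx : xk k n = k
  · rw [if_pos hx] at h2
    rcases Nat.lt_or_ge m (Lk k n + 1) with h | h
    · left; omega
    · right; exact ⟨hx, by omega⟩
  · rw [if_neg hx] at h2
    left; omega

lemma Lk_ge (k n : ℕ) : n ≤ Lk k n := by
  induction n with
  | zero => omega
  | succ n ih => have := Lk_lt_succ k n; omega

lemma block_start_gt_one (k : ℕ) (hk : 1 < k) (n : ℕ) : 1 < xk k (Lk k n) := by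
  rw [xk_block_start]
  have := (xk_range k hk n).1
  split <;> omega

lemma gt_one_iff (k : ℕ) (hk : 1 < k) (m : ℕ) : 1 < xk k m ↔ ∃ n, Lk k n = m := by
  constructor
  · intro h
    obtain ⟨n, hn | ⟨hx, hm⟩⟩ := coverage' k m
    · exact ⟨n, hn.symm⟩
    · exfalso; rw [hm, xk_block_one k n hx] at h; omega
  · rintro ⟨n, rfl⟩; exact block_start_gt_one k hk n

lemma Lk_lt_iff (k : ℕ) (hk : 1 < k) (n M : ℕ) : Lk k n < M ↔ n < Cgt k 1 M := by
  constructor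
  · intro h
    have hsub : (Finset.range (n+1)).image (Lk k) ⊆
        (Finset.range M).filter (fun m => 1 < xk k m) := by
      intro m hm
      simp only [Finset.mem_image, Finset.mem_range] at hm
      obtain ⟨i, hi, rfl⟩ := hm
      rw [Finset.mem_filter, Finset.mem_range]
      exact ⟨lt_of_le_of_lt ((Lk_strictMono k).le_iff_le.mpr (by omega)) h,
        block_start_gt_one k hk i⟩
    have hcard := Finset.card_le_card hsub
    rw [Finset.card_image_of_injective _ (Lk_strictMono k).injective,
      Finset.card_range] at hcard
    exact hcard
  · intro h
    by_contra hc
    push_neg at hc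
    have hsub : (Finset.range M).filter (fun m => 1 < xk k m) ⊆
        (Finset.range n).image (Lk k) := by
      intro m hm
      rw [Finset.mem_filter, Finset.mem_range] at hm
      obtain ⟨i, rfl⟩ := (gt_one_iff k hk m).mp hm.2
      rw [Finset.mem_image]
      refine ⟨i, Finset.mem_range.mpr ?_, rfl⟩
      exact (Lk_strictMono k).lt_iff_lt.mp (lt_of_lt_of_le hm.1 hc)
    have hcard := Finset.card_le_card hsub
    rw [Finset.card_image_of_injective _ (Lk_strictMono k).injective,
      Finset.card_range] at hcard
    have : Cgt k 1 M ≤ n := hcard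
    omega

lemma Cgt_step (k : ℕ) (hk : 1 < k) (j M : ℕ) (hj : j + 1 < k) :
    Cgt k (j + 1) M = Cgt k j (Cgt k 1 M) := by
  unfold Cgt
  symm
  apply Finset.card_bij (fun n _ => Lk k n)
  · intro n hn
    rw [Finset.mem_filter, Finset.mem_range] at hn ⊢
    refine ⟨(Lk_lt_iff k hk n M).mpr hn.1, ?_⟩
    rw [xk_block_start]
    have := hn.2
    split <;> omega
  · intro a _ b _ h
    exact (Lk_strictMono k).injective h
  · intro m hm
    rw [Finset.mem_filter, Finset.mem_range] at hm
    obtain ⟨hmM, hx⟩ := hm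
    obtain ⟨n, rfl⟩ := (gt_one_iff k hk m).mp (by omega)
    refine ⟨n, ?_, rfl⟩
    rw [Finset.mem_filter, Finset.mem_range]
    refine ⟨(Lk_lt_iff k hk n M).mp hmM, ?_⟩
    rw [xk_block_start] at hx
    have := (xk_range k hk n).2
    by_cases h : xk k n = k
    · omega
    · rw [if_neg h] at hx; omega

lemma Cgt_zero (k : ℕ) (hk : 1 < k) (M : ℕ) : Cgt k 0 M = M := by
  unfold Cgt
  rw [Finset.filter_true_of_mem, Finset.card_range]
  intro m _
  exact (xk_range k hk m).1

lemma iter_G (k : ℕ) (hk : 1 < k) (j : ℕ) (hj : j < k) (M : ℕ) :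
    (fun N => Cgt k 1 N)^[j] M = Cgt k j M := by
  induction j generalizing M with
  | zero => simp [Cgt_zero k hk]
  | succ j ih =>
    rw [Function.iterate_succ_apply, ih (by omega) (Cgt k 1 M)]
    exact (Cgt_step k hk j M hj).symm

lemma ones_count (k : ℕ) (hk : 1 < k) (M : ℕ) :
    Cgt k (k - 1) (Cgt k 1 M) = Ceq k 1 (M + 1) := by
  unfold Cgt Ceq
  apply Finset.card_bij (fun n _ => Lk k n + 1)
  · intro n hn
    rw [Finset.mem_filter, Finset.mem_range] at hn ⊢
    have hx : xk k n = k := by have := (xk_range k hk n).2; omega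
    refine ⟨?_, xk_block_one k n hx⟩
    have := (Lk_lt_iff k hk n M).mpr hn.1
    omega
  · intro a _ b _ h
    exact (Lk_strictMono k).injective (by omega)
  · intro m hm
    rw [Finset.mem_filter, Finset.mem_range] at hm
    obtain ⟨hmM, hx⟩ := hm
    obtain ⟨n, hn | ⟨hxn, hmn⟩⟩ := coverage' k m
    · exfalso
      have := block_start_gt_one k hk n
      rw [← hn, hx] at this; omega
    · refine ⟨n, ?_, hmn.symm⟩
      rw [Finset.mem_filter, Finset.mem_range]
      refine ⟨(Lk_lt_iff k hk n M).mp (by omega), by omega⟩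
  
lemma Gk_iter (k : ℕ) (hk : 1 < k) (M : ℕ) :
    (fun N => Cgt k 1 N)^[k] M = Ceq k 1 (M + 1) := by
  obtain ⟨j, rfl⟩ : ∃ j, k = j + 1 := ⟨k - 1, by omega⟩
  rw [Function.iterate_succ_apply, iter_G (j + 1) hk j (by omega) (Cgt (j + 1) 1 M)]
  simpa using ones_count (j + 1) hk M

lemma partition (k : ℕ) (hk : 1 < k) (N : ℕ) : Cgt k 1 N + Ceq k 1 N = N := by
  unfold Cgt Ceq
  have : ∀ m ∈ Finset.range N, 1 < xk k m ↔ ¬ (xk k m = 1) := by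
    intro m _
    have := (xk_range k hk m).1
    omega
  rw [Finset.filter_congr this, add_comm,
    Finset.card_filter_add_card_filter_not (fun m => xk k m = 1),
    Finset.card_range]

lemma Ceq_le (k : ℕ) (N : ℕ) : Ceq k 1 N ≤ N := by
  unfold Ceq
  exact le_trans (Finset.card_filter_le _ _) (by rw [Finset.card_range])

lemma Cgt_le (k : ℕ) (N : ℕ) : Cgt k 1 N ≤ N := by
  unfold Cgt
  exact le_trans (Finset.card_filter_le _ _) (by rw [Finset.card_range])

lemma G_rec (k : ℕ) (hk : 1 < k) (n : ℕ) (hn : 1 ≤ n) :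
    Cgt k 1 n = n - (fun N => Cgt k 1 N)^[k] (n - 1) := by
  have h1 : n - 1 + 1 = n := by omega
  rw [Gk_iter k hk (n - 1), h1]
  have := partition k hk n
  omega

lemma F_eq_G (k : ℕ) (hk : 1 < k) (F : ℕ → ℕ)
    (hF0 : F 0 = 0) (hF : ∀ n, 1 ≤ n → F n = n - F^[k] (n - 1)) :
    ∀ n, F n = Cgt k 1 n := by
  intro n
  induction n using Nat.strong_induction_on with
  | _ n ih =>
    rcases Nat.eq_zero_or_pos n with rfl | hn
    · rw [hF0]; rfl
    · have key : ∀ j m, m < n → F^[j] m = (fun N => Cgt k 1 N)^[j] m := by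
        intro j
        induction j with
        | zero => intro m _; rfl
        | succ j ihj =>
          intro m hm
          rw [Function.iterate_succ_apply, Function.iterate_succ_apply]
          rw [ih m hm]
          exact ihj (Cgt k 1 m) (lt_of_le_of_lt (Cgt_le k m) hm)
      rw [hF n hn, key k (n - 1) (by omega), ← G_rec k hk n hn]

end S7

/-- For k > 1: F_k(n) = n - C_k^{(=1)}(n) = C_k^{(≠1)}(n); consequently F_k(n+1) - F_k(n)
is 0 when x_k[n] = 1 and 1 otherwise. -/
theorem stmt7 (k : ℕ) (hk : 1 < k) (F : ℕ → ℕ)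
    (hF0 : F 0 = 0) (hF : ∀ n, 1 ≤ n → F n = n - F^[k] (n - 1)) :
    (∀ n, F n = n - Ceq k 1 n ∧
      F n = ((Finset.range n).filter (fun m => xk k m ≠ 1)).card) ∧
    (∀ n, (xk k n = 1 → F (n + 1) = F n) ∧ (xk k n ≠ 1 → F (n + 1) = F n + 1)) := by
  have hFG := S7.F_eq_G k hk F hF0 hF
  have hfilter : ∀ N, Cgt k 1 N = ((Finset.range N).filter (fun m => xk k m ≠ 1)).card := by
    intro N
    unfold Cgt
    congr 1
    apply Finset.filter_congr
    intro m _
    have := (S7.xk_range k hk m).1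
    simp only [ne_eq, eq_iff_iff]
    omega
  have hstep : ∀ n, Cgt k 1 (n + 1) = Cgt k 1 n + (if xk k n ≠ 1 then 1 else 0) := by
    intro n
    unfold Cgt
    rw [Finset.range_add_one, Finset.filter_insert]
    have h1 := (S7.xk_range k hk n).1
    by_cases hx : xk k n ≠ 1
    · rw [if_pos (by omega), Finset.card_insert_of_notMem (by simp), if_pos hx]
    · rw [if_neg (by omega), if_neg hx]
      omega
  refine ⟨fun n => ?_, fun n => ?_⟩
  · have h1 := hFG n
    have hpart := S7.partition k hk n
    exact ⟨by omega, by rw [h1, hfilter]⟩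
  · have h1 := hFG n
    have h2 := hFG (n + 1)
    have h3 := hstep n
    constructor
    · intro hx
      rw [if_neg (by simp [hx])] at h3
      omega
    · intro hx
      rw [if_pos hx] at h3
      omega
end

section
/- Let 1 ≤ j < k and n ≥ 0. Then x_k[n] = j if and only if both F_k^{j-1}(n+1) - F_k^{j-1}(n) = 1 and F_k^j(n+1) - F_k^j(n) = 0. Moreover, for any k ≥ 1, x_k[n] = k if and only if F_k^{k-1}(n+1) - F_k^{k-1}(n) = 1. -/
namespace Stmt8

/-- iterates of the substitution -/
def Wd (k t : ℕ) : List ℕ := (tauWord k)^[t] [k]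

lemma tauWord_append (k : ℕ) (u v : List ℕ) :
    tauWord k (u ++ v) = tauWord k u ++ tauWord k v := List.flatMap_append ..

lemma tauWord_cons (k a : ℕ) (u : List ℕ) :
    tauWord k (a :: u) = tauLetter k a ++ tauWord k u := List.flatMap_cons ..

lemma prefix_tau (k : ℕ) {u v : List ℕ} (h : u <+: v) :
    tauWord k u <+: tauWord k v := by
  obtain ⟨t, rfl⟩ := h
  rw [tauWord_append]; exact List.prefix_append _ _

lemma Wd_succ (k t : ℕ) : Wd k (t + 1) = tauWord k (Wd k t) :=
  Function.iterate_succ_apply' _ _ _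

lemma Wd_cons (k t : ℕ) : ∃ u, Wd k t = k :: u := by
  induction t with
  | zero => exact ⟨[], rfl⟩
  | succ t ih =>
    obtain ⟨u, hu⟩ := ih
    refine ⟨1 :: tauWord k u, ?_⟩
    rw [Wd_succ, hu, tauWord_cons]
    simp [tauLetter]

lemma length_tau_le (k : ℕ) (w : List ℕ) : w.length ≤ (tauWord k w).length := by
  induction w with
  | nil => simp [tauWord]
  | cons a u ih =>
    rw [tauWord_cons, List.length_append, List.length_cons]
    have : 1 ≤ (tauLetter k a).length := by
      unfold tauLetter; split <;> simp
    omega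

lemma Wd_prefix_succ (k t : ℕ) : Wd k t <+: Wd k (t + 1) := by
  induction t with
  | zero =>
    show [k] <+: Wd k 1
    rw [Wd_succ]
    show [k] <+: tauWord k [k]
    rw [tauWord_cons]
    simp [tauLetter, tauWord]
  | succ t ih =>
    have h := prefix_tau k ih
    rwa [← Wd_succ k t, ← Wd_succ k (t+1)] at h

lemma Wd_prefix (k : ℕ) {t s : ℕ} (h : t ≤ s) : Wd k t <+: Wd k s := by
  induction s, h using Nat.le_induction with
  | base => exact List.prefix_refl _
  | succ s _ ih => exact ih.trans (Wd_prefix_succ k s)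

lemma Wd_length (k t : ℕ) : t < (Wd k t).length := by
  induction t with
  | zero => simp [Wd]
  | succ t ih =>
    obtain ⟨u, hu⟩ := Wd_cons k t
    rw [Wd_succ, hu, tauWord_cons]
    have := length_tau_le k u
    have hl : (tauLetter k k).length = 2 := by simp [tauLetter]
    rw [List.length_append, hl]
    rw [hu] at ih
    simp at ih ⊢
    omega

lemma mem_tauLetter {k a i : ℕ} (hk : 1 ≤ k) (ha : 1 ≤ a ∧ a ≤ k)
    (h : i ∈ tauLetter k a) : 1 ≤ i ∧ i ≤ k := by
  unfold tauLetter at h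
  split at h <;> simp at h <;> omega

lemma mem_Wd {k t i : ℕ} (hk : 1 ≤ k) (h : i ∈ Wd k t) : 1 ≤ i ∧ i ≤ k := by
  induction t generalizing i with
  | zero => simp [Wd] at h; omega
  | succ t ih =>
    rw [Wd_succ] at h
    unfold tauWord at h
    rw [List.mem_flatMap] at h
    obtain ⟨a, ha, hi⟩ := h
    exact mem_tauLetter hk (ih ha) hi

lemma getD_prefix {u v : List ℕ} (h : u <+: v) {n : ℕ} (hn : n < u.length) :
    u.getD n 0 = v.getD n 0 := by
  rw [List.getD_eq_getElem u 0 hn, List.getD_eq_getElem v 0 (hn.trans_le h.length_le)]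
  exact h.getElem hn

lemma xk_eq_Wd {k t n : ℕ} (hn : n < (Wd k t).length) :
    (Wd k t).getD n 0 = xk k n := by
  show _ = (Wd k (n+1)).getD n 0
  rcases le_total t (n + 1) with h | h
  · exact getD_prefix (Wd_prefix k h) hn
  · exact (getD_prefix (Wd_prefix k h) (by have := Wd_length k (n+1); omega)).symm

lemma xk_bounds {k : ℕ} (hk : 1 ≤ k) (n : ℕ) : 1 ≤ xk k n ∧ xk k n ≤ k := by
  have hn := Wd_length k (n + 1)
  have hn' : n < (Wd k (n+1)).length := by omega
  have : xk k n = (Wd k (n+1)).getD n 0 := rfl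
  rw [this, List.getD_eq_getElem _ 0 hn']
  exact mem_Wd hk (List.getElem_mem hn')

lemma xk_zero {k : ℕ} : xk k 0 = k := by
  obtain ⟨u, hu⟩ := Wd_cons k 1
  have h1 : (0:ℕ) < (Wd k 1).length := by have := Wd_length k 1; omega
  rw [← xk_eq_Wd h1, hu]
  rfl

/-- prefix of length n of x_k, as a list -/
def Pref (k n : ℕ) : List ℕ := (List.range n).map (xk k)

lemma Pref_length (k n : ℕ) : (Pref k n).length = n := by simp [Pref]

lemma Pref_getD {k n m : ℕ} (h : n < m) : (Pref k m).getD n 0 = xk k n := by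
  have hl : n < (Pref k m).length := by rw [Pref_length]; exact h
  rw [List.getD_eq_getElem _ 0 hl]
  simp [Pref]

lemma Pref_succ (k n : ℕ) : Pref k (n + 1) = Pref k n ++ [xk k n] := by
  unfold Pref
  rw [List.range_succ, List.map_append]
  rfl

lemma Pref_eq_take {k n t : ℕ} (h : n ≤ (Wd k t).length) :
    Pref k n = (Wd k t).take n := by
  apply List.ext_getElem
  · simp [Pref_length]; omega
  · intro i h1 h2
    have hi : i < n := by rwa [Pref_length] at h1
    have hiw : i < (Wd k t).length := by omega
    have e1 : (Pref k n)[i] = xk k i := by simp [Pref]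
    have e2 : (Wd k t)[i]'hiw = xk k i := by
      rw [← List.getD_eq_getElem _ 0 hiw]; exact xk_eq_Wd hiw
    rw [e1, List.getElem_take, e2]

lemma Pref_prefix_Wd {k n t : ℕ} (h : n ≤ (Wd k t).length) :
    Pref k n <+: Wd k t := by
  rw [Pref_eq_take h]; exact List.take_prefix _ _

lemma length_tauWord_Pref (k m : ℕ) : (tauWord k (Pref k m)).length = Lk k m := rfl

/-- Prefix image lemma -/
lemma PIL (k m : ℕ) : Pref k (Lk k m) = tauWord k (Pref k m) := by
  have h1 : tauWord k (Pref k m) <+: Wd k (m + 1) := by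
    rw [Wd_succ]
    exact prefix_tau k (Pref_prefix_Wd (Wd_length k m).le)
  have h2 : Lk k m ≤ (Wd k (m+1)).length := by
    rw [← length_tauWord_Pref]; exact h1.length_le
  rw [Pref_eq_take h2, List.prefix_iff_eq_take.1 h1, length_tauWord_Pref]

lemma Lk_zero (k : ℕ) : Lk k 0 = 0 := rfl

lemma Pref_L_succ (k m : ℕ) :
    Pref k (Lk k (m+1)) = Pref k (Lk k m) ++ tauLetter k (xk k m) := by
  rw [PIL, Pref_succ, tauWord_append, ← PIL]
  simp [tauWord]

lemma Lk_succ (k m : ℕ) :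
    Lk k (m+1) = Lk k m + (tauLetter k (xk k m)).length := by
  have := congrArg List.length (Pref_L_succ k m)
  simpa [Pref_length] using this

lemma getD_append_len (u v : List ℕ) (i : ℕ) (h : i < v.length) :
    (u ++ v).getD (u.length + i) 0 = v.getD i 0 := by
  rw [List.getD_eq_getElem _ 0 (by simp; omega), List.getD_eq_getElem _ 0 h]
  rw [List.getElem_append_right (by omega)]
  congr 1
  omega

lemma xk_in_block (k m : ℕ) {i : ℕ} (hi : i < (tauLetter k (xk k m)).length) :
    xk k (Lk k m + i) = (tauLetter k (xk k m)).getD i 0 := by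
  have hlt : Lk k m + i < Lk k (m+1) := by rw [Lk_succ]; omega
  rw [← Pref_getD (k := k) hlt, Pref_L_succ,
    show Lk k m + i = (Pref k (Lk k m)).length + i by rw [Pref_length]]
  exact getD_append_len _ _ i hi

/-- block structure lemma -/
lemma block (k m : ℕ) :
    (xk k m = k ∧ Lk k (m+1) = Lk k m + 2 ∧ xk k (Lk k m) = k ∧ xk k (Lk k m + 1) = 1)
    ∨ (xk k m ≠ k ∧ Lk k (m+1) = Lk k m + 1 ∧ xk k (Lk k m) = xk k m + 1) := by
  have hL := Lk_succ k m
  by_cases h : xk k m = k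
  · left
    have ht : tauLetter k (xk k m) = [k, 1] := by simp [tauLetter, h]
    have h0 := xk_in_block k m (i := 0) (by rw [ht]; simp)
    have h1 := xk_in_block k m (i := 1) (by rw [ht]; simp)
    rw [ht] at h0 h1 hL
    exact ⟨h, by simpa using hL, by simpa using h0, by simpa using h1⟩
  · right
    have ht : tauLetter k (xk k m) = [xk k m + 1] := by simp [tauLetter, h]
    have h0 := xk_in_block k m (i := 0) (by rw [ht]; simp)
    rw [ht] at h0 hL
    exact ⟨h, by simpa using hL, by simpa using h0⟩

lemma Lk_lt_succ (k m : ℕ) : Lk k m < Lk k (m+1) := by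
  rcases block k m with ⟨_, h, _⟩ | ⟨_, h, _⟩ <;> omega

lemma block_decomp (k n : ℕ) : ∃ m, Lk k m ≤ n ∧ n < Lk k (m+1) := by
  induction n with
  | zero =>
    have h0 : Lk k 0 = 0 := rfl
    have h1 := Lk_lt_succ k 0
    exact ⟨0, by omega, by omega⟩
  | succ n ih =>
    obtain ⟨m, h1, h2⟩ := ih
    by_cases h : n + 1 < Lk k (m+1)
    · exact ⟨m, by omega, h⟩
    · exact ⟨m+1, by omega, by have := Lk_lt_succ k (m+1); omega⟩

lemma pos_form {k n : ℕ} (h : 2 ≤ xk k n) : ∃ m, n = Lk k m := by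
  obtain ⟨m, h1, h2⟩ := block_decomp k n
  rcases block k m with ⟨_, hL, _, h1x⟩ | ⟨_, hL, _⟩
  · rcases (by omega : n = Lk k m ∨ n = Lk k m + 1) with rfl | rfl
    · exact ⟨m, rfl⟩
    · omega
  · exact ⟨m, by omega⟩

/-- counting function: number of letters > j in the length-n prefix -/
def A (k j n : ℕ) : ℕ := (Pref k n).countP (fun i => decide (j < i))

lemma A_zero_right (k j : ℕ) : A k j 0 = 0 := rfl

lemma A_succ (k j n : ℕ) :
    A k j (n+1) = A k j n + if j < xk k n then 1 else 0 := by
  unfold A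
  rw [Pref_succ, List.countP_append]
  simp [List.countP_cons]

lemma A_zero {k : ℕ} (hk : 1 ≤ k) (n : ℕ) : A k 0 n = n := by
  induction n with
  | zero => rfl
  | succ n ih =>
    rw [A_succ, ih, if_pos (show 0 < xk k n by have := (xk_bounds hk n).1; omega)]

lemma A_le (k j n : ℕ) : A k j n ≤ n := by
  have := List.countP_le_length (l := Pref k n) (p := fun i => decide (j < i))
  rwa [Pref_length] at this

lemma countP_tau {k j : ℕ} (hj : 1 ≤ j) (hjk : j < k) (w : List ℕ)
    (hw : ∀ i ∈ w, 1 ≤ i ∧ i ≤ k) :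
    (tauWord k w).countP (fun i => decide (j < i)) =
      w.countP (fun i => decide (j - 1 < i)) := by
  induction w with
  | nil => rfl
  | cons a u ih =>
    rw [tauWord_cons, List.countP_append, List.countP_cons,
      ih (fun i hi => hw i (List.mem_cons_of_mem a hi))]
    have ha := hw a List.mem_cons_self
    by_cases h : a = k
    · subst h
      have h1 : (tauLetter a a).countP (fun i => decide (j < i)) = 1 := by
        have ht : tauLetter a a = [a, 1] := if_pos rfl
        simp [ht, List.countP_cons, hjk, Nat.not_lt.2 hj]
      rw [h1]
      have h2 : decide (j - 1 < a) = true := by simp; omega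
      rw [h2]
      simp [Nat.add_comm]
    · have ht : tauLetter k a = [a + 1] := by simp [tauLetter, h]
      rw [ht]
      have h2 : (j < a + 1) = (j - 1 < a) := by
        simp only [eq_iff_iff]; omega
      simp [List.countP_cons, h2, Nat.add_comm]

lemma A_L {k j : ℕ} (hj : 1 ≤ j) (hjk : j < k) (m : ℕ) :
    A k j (Lk k m) = A k (j-1) m := by
  unfold A
  rw [PIL]
  exact countP_tau hj hjk _ (by
    intro i hi
    simp only [Pref, List.mem_map] at hi
    obtain ⟨p, _, rfl⟩ := hi
    exact xk_bounds (by omega) p)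

/-- Key letter-transfer lemma -/
lemma lemC {k : ℕ} (hk : 2 ≤ k) :
    ∀ j, 1 ≤ j → j ≤ k - 1 → ∀ n, j ≤ xk k n →
      (j + 1 ≤ xk k n ↔ 2 ≤ xk k (A k (j-1) n)) := by
  intro j
  induction j with
  | zero => omega
  | succ j ih =>
    intro _ hjk n hn
    rcases Nat.eq_zero_or_pos j with rfl | hj
    · rw [show A k 0 n = n from A_zero (by omega) n]
    · -- j+1 ≥ 2, so x n ≥ 2, n = L m
      obtain ⟨m, rfl⟩ := pos_form (k := k) (show 2 ≤ xk k n by omega)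
      have hAL : A k j (Lk k m) = A k (j-1) m := A_L hj (by omega) m
      have hxm := xk_bounds (k := k) (show 1 ≤ k by omega) m
      rcases block k m with ⟨hxk, _, hx1, _⟩ | ⟨hne, _, hx1⟩
      · rw [hx1]
        have hIH := ih hj (by omega) m (by omega)
        simp only [Nat.add_sub_cancel] at *
        rw [hAL]
        constructor
        · intro _; exact (hIH.mp (by omega))
        · intro _; omega
      · rw [hx1] at hn ⊢
        have hIH := ih hj (by omega) m (by omega)
        simp only [Nat.add_sub_cancel] at *
        rw [hAL]
        constructor
        · intro h; exact hIH.mp (by omega)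
        · intro h; have := hIH.mpr h; omega

/-- characterization of positions carrying letter 1 -/
lemma lemD {k : ℕ} (hk : 2 ≤ k) (n : ℕ) :
    xk k (n+1) = 1 ↔ (xk k n = k ∧ 2 ≤ xk k (A k (k-1) n)) := by
  constructor
  · intro h
    obtain ⟨m, h1, h2⟩ := block_decomp k (n+1)
    rcases block k m with ⟨hxk, hL, hx1, hx2⟩ | ⟨hne, hL, hx1⟩
    · rcases (by omega : n + 1 = Lk k m ∨ n + 1 = Lk k m + 1) with he | he
      · rw [he, hx1] at h; omega
      · have hn : n = Lk k m := by omega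
        subst hn
        have hAL : A k (k-1) (Lk k m) = A k (k-1-1) m := A_L (by omega) (by omega) m
        refine ⟨hx1, ?_⟩
        rw [hAL]
        exact (lemC hk (k-1) (by omega) le_rfl m (show k - 1 ≤ xk k m by omega)).mp
          (by omega)
    · have he : n + 1 = Lk k m := by omega
      rw [he, hx1] at h
      have := (xk_bounds (k := k) (by omega) m).1
      omega
  · rintro ⟨hxn, h2⟩
    obtain ⟨m, hm⟩ := pos_form (k := k) (show 2 ≤ xk k n by omega)
    subst hm
    have hAL : A k (k-1) (Lk k m) = A k (k-1-1) m := A_L (by omega) (by omega) m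
    rw [hAL] at h2
    have hxm := xk_bounds (k := k) (by omega) m
    rcases block k m with ⟨hxk, hL, hx1, hx2⟩ | ⟨hne, hL, hx1⟩
    · exact hx2
    · exfalso
      rw [hx1] at hxn
      have := (lemC hk (k-1) (by omega) le_rfl m
        (show k - 1 ≤ xk k m by omega)).mpr h2
      omega

/-- (I') : A 1 ∘ A (j-1) = A j for 1 ≤ j ≤ k-1 -/
lemma I' {k : ℕ} (hk : 2 ≤ k) {j : ℕ} (hj : 1 ≤ j) (hjk : j ≤ k - 1) (n : ℕ) :
    A k 1 (A k (j-1) n) = A k j n := by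
  induction n with
  | zero => rfl
  | succ n ih =>
    rw [A_succ k (j-1) n, A_succ k j n]
    by_cases h : j - 1 < xk k n
    · have hC := lemC hk j hj hjk n (by omega)
      rw [if_pos h, A_succ k 1 (A k (j-1) n), ih]
      by_cases h2 : j < xk k n
      · rw [if_pos h2, if_pos (show 1 < xk k (A k (j-1) n) by
          have := hC.mp (by omega); omega)]
      · rw [if_neg h2, if_neg (show ¬ 1 < xk k (A k (j-1) n) by
          intro hcon
          exact h2 (by have := hC.mpr (by omega); omega))]
    · rw [if_neg h, if_neg (show ¬ j < xk k n by omega)]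
      simpa using ih

/-- count of 1's -/
def c1 (k n : ℕ) : ℕ := (Pref k n).count 1

lemma c1_succ (k n : ℕ) : c1 k (n+1) = c1 k n + if xk k n = 1 then 1 else 0 := by
  unfold c1
  rw [Pref_succ, List.count_append]
  congr 1
  rcases eq_or_ne (xk k n) 1 with h | h <;> simp [List.count_cons, h]

lemma A1_add_c1 {k : ℕ} (hk : 1 ≤ k) (n : ℕ) : A k 1 n + c1 k n = n := by
  induction n with
  | zero => rfl
  | succ n ih =>
    rw [A_succ, c1_succ]
    have h1 := (xk_bounds hk n).1
    by_cases h : xk k n = 1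
    · rw [if_neg (by omega), if_pos h]; omega
    · rw [if_pos (by omega), if_neg h]; omega

/-- (II') -/
lemma II' {k : ℕ} (hk : 2 ≤ k) (n : ℕ) :
    A k 1 (A k (k-1) n) = c1 k (n+1) := by
  induction n with
  | zero =>
    have h0 : c1 k 1 = 0 := by
      unfold c1
      rw [Pref_succ]
      simp [Pref, List.count_cons, xk_zero]
      omega
    rw [h0]; rfl
  | succ n ih =>
    rw [A_succ k (k-1) n, c1_succ k (n+1)]
    have hb := xk_bounds (k := k) (by omega : 1 ≤ k) n
    have hD := lemD hk n
    by_cases h : k - 1 < xk k n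
    · have hxk : xk k n = k := by omega
      rw [if_pos h, A_succ k 1 (A k (k-1) n), ih]
      by_cases h2 : 2 ≤ xk k (A k (k-1) n)
      · rw [if_pos (by omega), if_pos (hD.mpr ⟨hxk, h2⟩)]
      · rw [if_neg (by omega), if_neg (show ¬ xk k (n+1) = 1 by
          intro hcon; exact h2 (hD.mp hcon).2)]
    · rw [if_neg h, if_neg (show ¬ xk k (n+1) = 1 by
        intro hcon; have := (hD.mp hcon).1; omega)]
      simpa using ih

lemma A1_iter {k : ℕ} (hk : 2 ≤ k) {j : ℕ} (hjk : j ≤ k - 1) (n : ℕ) :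
    (A k 1)^[j] n = A k j n := by
  induction j with
  | zero => simp [A_zero (show 1 ≤ k by omega)]
  | succ j ih =>
    rw [Function.iterate_succ_apply', ih (by omega)]
    have hI := I' hk (j := j+1) (by omega) hjk n
    simpa using hI

lemma F_eq_A1 {k : ℕ} (hk : 2 ≤ k) (F : ℕ → ℕ)
    (hF0 : F 0 = 0) (hF : ∀ n, 1 ≤ n → F n = n - F^[k] (n - 1)) :
    ∀ n, F n = A k 1 n := by
  intro n
  induction n using Nat.strong_induction_on with
  | _ n ih =>
    match n with
    | 0 => rw [hF0]; rfl
    | n + 1 =>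
      have hstep : ∀ i, F^[i] n = (A k 1)^[i] n := by
        intro i
        induction i with
        | zero => rfl
        | succ i ihi =>
          rw [Function.iterate_succ_apply', Function.iterate_succ_apply', ihi]
          apply ih
          have h1 : (A k 1)^[i] n ≤ n := by
            clear ihi
            induction i with
            | zero => exact le_refl n
            | succ i ihii =>
              rw [Function.iterate_succ_apply']
              exact le_trans (A_le k 1 _) ihii
          omega
      have hk1 : F^[k] n = A k 1 (A k (k-1) n) := by
        have e := Function.iterate_succ_apply' (A k 1) (k-1) n
        rw [show (k - 1).succ = k by omega] at e
        rw [hstep k, e, A1_iter hk le_rfl]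
      rw [hF (n+1) (by omega), Nat.add_sub_cancel, hk1, II' hk n]
      have := A1_add_c1 (show 1 ≤ k by omega) (n + 1)
      omega

lemma F_iter_eq_A {k : ℕ} (hk : 2 ≤ k) (F : ℕ → ℕ)
    (hF0 : F 0 = 0) (hF : ∀ n, 1 ≤ n → F n = n - F^[k] (n - 1))
    {j : ℕ} (hjk : j ≤ k - 1) (n : ℕ) : F^[j] n = A k j n := by
  induction j with
  | zero => simp [A_zero (show 1 ≤ k by omega)]
  | succ j ih =>
    rw [Function.iterate_succ_apply', ih (by omega), F_eq_A1 hk F hF0 hF]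
    have hI := I' hk (j := j+1) (by omega) hjk n
    simpa using hI

end Stmt8

open Stmt8 in
/-- Description of the letters of x_k in terms of the differences ∂F_k^j(n) = F_k^j(n+1) - F_k^j(n):
for 1 ≤ j < k, x_k[n] = j iff ∂F_k^{j-1}(n) = 1 and ∂F_k^j(n) = 0; and for k ≥ 1,
x_k[n] = k iff ∂F_k^{k-1}(n) = 1. -/
theorem stmt8 (k : ℕ) (hk : 1 ≤ k) (F : ℕ → ℕ)
    (hF0 : F 0 = 0) (hF : ∀ n, 1 ≤ n → F n = n - F^[k] (n - 1)) :
    (∀ j, 1 ≤ j → j < k → ∀ n : ℕ,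
      (xk k n = j ↔
        ((F^[j - 1] (n + 1) : ℤ) - F^[j - 1] n = 1 ∧ (F^[j] (n + 1) : ℤ) - F^[j] n = 0))) ∧
    (∀ n : ℕ, xk k n = k ↔ (F^[k - 1] (n + 1) : ℤ) - F^[k - 1] n = 1) := by
  rcases eq_or_lt_of_le hk with hk1 | hk2
  · -- k = 1
    constructor
    · intro j h1 h2; omega
    · intro n
      have hx := xk_bounds hk n
      simp only [← hk1] at *
      simp only [show (1:ℕ) - 1 = 0 from rfl, Function.iterate_zero, id_eq]
      constructor
      · intro _; push_cast; ring
      · intro _; omega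
  · -- k ≥ 2
    have hk2 : 2 ≤ k := hk2
    constructor
    · intro j hj1 hjk n
      have hb := xk_bounds hk n
      have e1 : F^[j-1] (n+1) = A k (j-1) (n+1) := F_iter_eq_A hk2 F hF0 hF (by omega) _
      have e2 : F^[j-1] n = A k (j-1) n := F_iter_eq_A hk2 F hF0 hF (by omega) _
      have e3 : F^[j] (n+1) = A k j (n+1) := F_iter_eq_A hk2 F hF0 hF (by omega) _
      have e4 : F^[j] n = A k j n := F_iter_eq_A hk2 F hF0 hF (by omega) _
      rw [e1, e2, e3, e4, A_succ k (j-1) n, A_succ k j n]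
      constructor
      · intro h
        rw [if_pos (by omega), if_neg (by omega)]
        constructor <;> push_cast <;> ring
      · rintro ⟨h1, h2⟩
        by_cases ha : j - 1 < xk k n
        · by_cases hb2 : j < xk k n
          · rw [if_pos hb2] at h2
            push_cast at h2
            omega
          · omega
        · rw [if_neg ha] at h1
          push_cast at h1
          omega
    · intro n
      have hb := xk_bounds hk n
      have e1 : F^[k-1] (n+1) = A k (k-1) (n+1) := F_iter_eq_A hk2 F hF0 hF le_rfl _
      have e2 : F^[k-1] n = A k (k-1) n := F_iter_eq_A hk2 F hF0 hF le_rfl _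
      rw [e1, e2, A_succ k (k-1) n]
      constructor
      · intro h
        rw [if_pos (by omega)]
        push_cast; ring
      · intro h
        by_cases ha : k - 1 < xk k n
        · omega
        · rw [if_neg ha] at h
          exfalso
          push_cast at h
          omega
end

section
/- The sequence (α_k)_{k≥1} is strictly increasing and contained in [1/2, 1), and the sequence (β_k)_{k≥1} is strictly decreasing and contained in (1, 2]. Moreover, for all k ≥ 1, 1 + 1/k ≤ β_k ≤ 1 + 1/√k (equivalently, √k ≤ β_k^{k-1} ≤ k); hence β_k → 1 and α_k → 1 as k → ∞. -/
/-!
Put `t = β_k - 1`, so that the defining equation reads `β_k ^ (k - 1) * t = 1`. Bernoulli's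
inequality for `β_k` and for `β_k⁻¹` turns it into `t + (k - 1) t² ≤ 1 ≤ t² + (k - 1) t`, and since
`t ≤ 1` this gives `k t² ≤ 1 ≤ k t`, i.e. both bounds on `β_k` (and on `β_k ^ (k - 1) = 1 / t`).
The map `(x, n) ↦ x ^ n (x - 1)` increases in both `x > 1` and `n`, so `β_k` decreases strictly;
finally `β_k⁻¹` is a positive root of the strictly increasing `X ^ k + X - 1`, so `α_k = β_k⁻¹`.
-/

open Filter Topology

/-- `b` is the root in `(1, ∞)` of `X ^ (n + 1) - X ^ n - 1`; thus `β_k` satisfies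
`IsBetaRoot (k - 1) β_k`. -/
structure IsBetaRoot (n : ℕ) (b : ℝ) : Prop where
  one_lt : 1 < b
  pow_mul_sub_one : b ^ n * (b - 1) = 1

lemma isBetaRoot_pred {k : ℕ} {b : ℝ} (hk : 1 ≤ k) (hb : 0 < b)
    (h : b ^ k - b ^ (k - 1) - 1 = 0) : IsBetaRoot (k - 1) b := by
  obtain ⟨n, rfl⟩ := Nat.exists_eq_add_of_le' hk
  rw [Nat.add_sub_cancel] at h ⊢
  have hmul : b ^ n * (b - 1) = 1 := by
    rw [pow_succ] at h
    linear_combination h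
  refine ⟨?_, hmul⟩
  by_contra! hb1
  have : b ^ n * (b - 1) ≤ 0 := mul_nonpos_of_nonneg_of_nonpos (by positivity) (by linarith)
  linarith

namespace IsBetaRoot

variable {m n : ℕ} {b c : ℝ}

lemma le_two (hb : IsBetaRoot n b) : b ≤ 2 := by
  have := one_le_pow₀ (n := n) hb.one_lt.le
  nlinarith [hb.pow_mul_sub_one]

lemma mem_Ioc (hb : IsBetaRoot n b) : b ∈ Set.Ioc 1 2 := ⟨hb.one_lt, hb.le_two⟩

lemma inv_pow_eq (hb : IsBetaRoot n b) : b⁻¹ ^ n = b - 1 := by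
  rw [inv_pow]
  exact inv_eq_of_mul_eq_one_right hb.pow_mul_sub_one

lemma inv_pow_succ_add_inv (hb : IsBetaRoot n b) : b⁻¹ ^ (n + 1) + b⁻¹ = 1 := by
  have : b ≠ 0 := by linarith [hb.one_lt]
  rw [pow_succ, hb.inv_pow_eq]
  field_simp
  ring

lemma inv_mem_Ico (hb : IsBetaRoot n b) : b⁻¹ ∈ Set.Ico (1 / 2) 1 := by
  rw [one_div]
  exact ⟨inv_anti₀ (by linarith [hb.one_lt]) hb.le_two, inv_lt_one_of_one_lt₀ hb.one_lt⟩

lemma lt_of_index_lt (hb : IsBetaRoot m b) (hc : IsBetaRoot n c) (hmn : m < n) : c < b := by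
  by_contra! hbc
  have hpow : b ^ m < b ^ n := pow_lt_pow_right₀ hb.one_lt hmn
  have hb0 : 0 < b := zero_lt_one.trans hb.one_lt
  have hsub : 0 < b - 1 := by linarith [hb.one_lt]
  have : (1 : ℝ) < 1 :=
    calc 1 = b ^ m * (b - 1) := hb.pow_mul_sub_one.symm
      _ < b ^ n * (b - 1) := mul_lt_mul_of_pos_right hpow hsub
      _ ≤ c ^ n * (c - 1) := mul_le_mul (pow_le_pow_left₀ hb0.le hbc n) (sub_le_sub_right hbc 1)
          hsub.le (pow_nonneg (hb0.le.trans hbc) n)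
      _ = 1 := hc.pow_mul_sub_one
  exact this.false

lemma one_le_succ_mul (hb : IsBetaRoot n b) : 1 ≤ (n + 1) * (b - 1) := by
  have hb0 : 0 < b := zero_lt_one.trans hb.one_lt
  have hbern := one_add_mul_le_pow (a := b⁻¹ - 1) (by linarith [inv_pos.2 hb0]) n
  rw [add_sub_cancel, hb.inv_pow_eq] at hbern
  have : b + n * (1 - b) ≤ b * (b - 1) :=
    calc b + n * (1 - b) = b * (1 + n * (b⁻¹ - 1)) := by field_simp
      _ ≤ b * (b - 1) := by gcongr
  nlinarith [hb.one_lt, hb.le_two]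

lemma succ_mul_sq_le_one (hb : IsBetaRoot n b) : (n + 1) * (b - 1) ^ 2 ≤ 1 := by
  have hb1 := hb.one_lt
  have hbern := one_add_mul_le_pow (a := b - 1) (by linarith) n
  rw [add_sub_cancel] at hbern
  nlinarith [hb.pow_mul_sub_one, hb.le_two]

lemma sqrt_succ_mul_le_one (hb : IsBetaRoot n b) : √(n + 1) * (b - 1) ≤ 1 := by
  have hsub : 0 ≤ b - 1 := by linarith [hb.one_lt]
  rw [← pow_le_one_iff_of_nonneg (by positivity) two_ne_zero, mul_pow,
    Real.sq_sqrt (by positivity)]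
  exact hb.succ_mul_sq_le_one

lemma one_add_inv_succ_le (hb : IsBetaRoot n b) : 1 + 1 / (n + 1) ≤ b := by
  have : 1 / (n + 1 : ℝ) ≤ b - 1 := by
    rw [div_le_iff₀ (by positivity)]
    linarith [hb.one_le_succ_mul]
  linarith

lemma le_one_add_inv_sqrt_succ (hb : IsBetaRoot n b) : b ≤ 1 + 1 / √(n + 1) := by
  have : b - 1 ≤ 1 / √(n + 1) := by
    rw [le_div_iff₀ (by positivity)]
    linarith [hb.sqrt_succ_mul_le_one]
  linarith

lemma pow_le_succ (hb : IsBetaRoot n b) : b ^ n ≤ n + 1 := by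
  have := pow_pos (zero_lt_one.trans hb.one_lt) n
  nlinarith [hb.one_le_succ_mul, hb.pow_mul_sub_one]

lemma sqrt_succ_le_pow (hb : IsBetaRoot n b) : √(n + 1) ≤ b ^ n := by
  have := pow_pos (zero_lt_one.trans hb.one_lt) n
  nlinarith [hb.sqrt_succ_mul_le_one, hb.pow_mul_sub_one]

end IsBetaRoot

lemma strictMonoOn_pow_add_self (k : ℕ) : StrictMonoOn (fun x : ℝ => x ^ k + x) (Set.Ici 0) :=
  fun _ hx _ _ hxy => add_lt_add_of_le_of_lt (pow_le_pow_left₀ hx hxy.le k) hxy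

lemma eq_inv_of_isBetaRoot {k : ℕ} {a b : ℝ} (hk : 1 ≤ k) (ha : 0 < a) (h : a ^ k + a - 1 = 0)
    (hb : IsBetaRoot (k - 1) b) : a = b⁻¹ := by
  have hinv := hb.inv_pow_succ_add_inv
  rw [Nat.sub_add_cancel hk] at hinv
  refine (strictMonoOn_pow_add_self k).injOn ha.le
    (inv_nonneg.2 (zero_le_one.trans hb.one_lt.le)) ?_
  linarith

lemma tendsto_one_add_inv_sqrt_natCast :
    Tendsto (fun k : ℕ => 1 + 1 / √(k : ℝ)) atTop (𝓝 1) := by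
  simpa using ((tendsto_inv_atTop_zero.comp
    (Real.tendsto_sqrt_atTop.comp tendsto_natCast_atTop_atTop)).const_add 1)

/-- Monotonicity and bounds for the sequences (α_k) and (β_k), where α_k is the unique
positive root of X^k + X - 1 and β_k the unique positive root of X^k - X^{k-1} - 1. -/
theorem stmt9 (α β : ℕ → ℝ)
    (hα : ∀ k : ℕ, 1 ≤ k → 0 < α k ∧ (α k) ^ k + α k - 1 = 0)
    (hβ : ∀ k : ℕ, 1 ≤ k → 0 < β k ∧ (β k) ^ k - (β k) ^ (k - 1) - 1 = 0) :
    StrictMonoOn α {k : ℕ | 1 ≤ k} ∧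
    (∀ k : ℕ, 1 ≤ k → α k ∈ Set.Ico (1 / 2 : ℝ) 1) ∧
    StrictAntiOn β {k : ℕ | 1 ≤ k} ∧
    (∀ k : ℕ, 1 ≤ k → β k ∈ Set.Ioc (1 : ℝ) 2) ∧
    (∀ k : ℕ, 1 ≤ k → 1 + 1 / (k : ℝ) ≤ β k ∧ β k ≤ 1 + 1 / Real.sqrt k) ∧
    (∀ k : ℕ, 1 ≤ k → Real.sqrt k ≤ (β k) ^ (k - 1) ∧ (β k) ^ (k - 1) ≤ k) ∧
    Filter.Tendsto (fun k => β k) Filter.atTop (nhds 1) ∧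
    Filter.Tendsto (fun k => α k) Filter.atTop (nhds 1) := by
  have hroot (k : ℕ) (hk : 1 ≤ k) : IsBetaRoot (k - 1) (β k) :=
    isBetaRoot_pred hk (hβ k hk).1 (hβ k hk).2
  have hαβ (k : ℕ) (hk : 1 ≤ k) : α k = (β k)⁻¹ :=
    eq_inv_of_isBetaRoot hk (hα k hk).1 (hα k hk).2 (hroot k hk)
  have hanti : StrictAntiOn β {k : ℕ | 1 ≤ k} := fun m hm n hn hmn =>
    (hroot m hm).lt_of_index_lt (hroot n hn) (Nat.sub_lt_sub_right hm hmn)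
  have hbounds (k : ℕ) (hk : 1 ≤ k) :
      (1 + 1 / (k : ℝ) ≤ β k ∧ β k ≤ 1 + 1 / √k) ∧ (√k ≤ β k ^ (k - 1) ∧ β k ^ (k - 1) ≤ k) := by
    obtain ⟨n, rfl⟩ := Nat.exists_eq_add_of_le' hk
    have hb := hroot (n + 1) hk
    simp only [Nat.add_sub_cancel, Nat.cast_add_one] at hb ⊢
    exact ⟨⟨hb.one_add_inv_succ_le, hb.le_one_add_inv_sqrt_succ⟩,
      hb.sqrt_succ_le_pow, hb.pow_le_succ⟩
  have hβlim : Tendsto β atTop (𝓝 1) := by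
    refine tendsto_of_tendsto_of_tendsto_of_le_of_le' tendsto_const_nhds
      tendsto_one_add_inv_sqrt_natCast ?_ ?_ <;>
      filter_upwards [eventually_ge_atTop 1] with k hk
    exacts [(hroot k hk).one_lt.le, (hbounds k hk).1.2]
  refine ⟨fun m hm n hn hmn => ?_, fun k hk => ?_, hanti, fun k hk => (hroot k hk).mem_Ioc,
    fun k hk => (hbounds k hk).1, fun k hk => (hbounds k hk).2, hβlim, ?_⟩
  · rw [hαβ m hm, hαβ n hn]
    exact inv_strictAnti₀ (zero_lt_one.trans (hroot n hn).one_lt) (hanti hm hn hmn)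
  · rw [hαβ k hk]
    exact (hroot k hk).inv_mem_Ico
  · have hinv : Tendsto (fun k => (β k)⁻¹) atTop (𝓝 1) := by simpa using hβlim.inv₀ one_ne_zero
    refine hinv.congr' ?_
    filter_upwards [eventually_ge_atTop 1] with k hk
    exact (hαβ k hk).symm
end
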